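/- arXiv:2307.14896 — 12 statements merged into one kernel-verified Lean document; each statement's English description precedes it below -/
import Mathlib

section
/- Let n be a positive squarefree integer, d > 1 an integer not dividing n, d₁ = gcd(d, n), and S = {0 ≤ a < d : gcd(a, d₁) = 1}. Suppose the elements of {1 ≤ a ≤ n : gcd(a,n) = 1}, reduced modulo d, are equidistributed among the elements of S (each residue class in S contains exactly φ(n)·d₁/(φ(d₁)·d) such elements). Then the d-th cyclotomic polynomial Φ_d divides F_n in ℤ[x]. -/
open Polynomial Finset

lemma sum_range_mul_eq (f : ℕ → ℂ) (k m : ℕ) :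
    ∑ s ∈ range (k * m), f s = ∑ j ∈ range m, ∑ t ∈ range k, f (k * j + t) := by
  induction m with
  | zero => simp
  | succ m ih => rw [Nat.mul_succ, Finset.sum_range_add, ih, Finset.sum_range_succ]

/-- Fekete polynomial of the principal Dirichlet character mod `n`. -/
noncomputable def Fek (n : ℕ) : Polynomial ℤ :=
  ∑ a ∈ Finset.range n, if Nat.gcd a n = 1 then X ^ a else 0

theorem stmt3 (n d d₁ : ℕ) (hn : Squarefree n) (hd : 1 < d) (hnd : ¬ d ∣ n)
    (hd₁ : d₁ = Nat.gcd d n)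
    (hequi : ∀ s ∈ (Finset.range d).filter (fun a => Nat.gcd a d₁ = 1),
      ((Finset.Icc 1 n).filter (fun a => Nat.gcd a n = 1 ∧ a % d = s)).card
        * (Nat.totient d₁ * d) = Nat.totient n * d₁) :
    cyclotomic d ℤ ∣ Fek n := by
  have hn0 : n ≠ 0 := hn.ne_zero
  have hd0 : 0 < d := by omega
  have hd₁d : d₁ ∣ d := hd₁ ▸ Nat.gcd_dvd_left d n
  have hd₁n : d₁ ∣ n := hd₁ ▸ Nat.gcd_dvd_right d n
  have hd₁0 : 0 < d₁ := Nat.pos_of_dvd_of_pos hd₁n (Nat.pos_of_ne_zero hn0)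
  have hd₁lt : d₁ < d := by
    rcases lt_or_eq_of_le (Nat.le_of_dvd hd0 hd₁d) with h | h
    · exact h
    · exact absurd (h ▸ hd₁n) hnd
  -- n > 1
  have hn1 : 1 < n := by
    rcases Nat.lt_or_ge n 2 with h | h
    · exfalso
      have hne : n = 1 := by omega
      subst hne
      have h1 : d₁ = 1 := by simp [hd₁]
      have := hequi 1 (by simp [h1, hd])
      simp [h1, Nat.mod_eq_of_lt hd] at this
      omega
    · exact h
  -- primitive root setup
  obtain ⟨ζ, hz⟩ : ∃ ζ : ℂ, IsPrimitiveRoot ζ d :=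
    ⟨_, Complex.isPrimitiveRoot_exp d (by omega)⟩
  set m := d / d₁ with hm
  have hdm : d = d₁ * m := (Nat.mul_div_cancel' hd₁d).symm
  have hm1 : 1 < m := by
    by_contra h
    push_neg at h
    have : d₁ * m ≤ d₁ * 1 := Nat.mul_le_mul_left d₁ h
    omega
  -- sum over S vanishes
  have hSsum : ∑ s ∈ (range d).filter (fun s => Nat.gcd s d₁ = 1), ζ ^ s = 0 := by
    rw [Finset.sum_filter]
    rw [show d = d₁ * m from hdm, sum_range_mul_eq]
    have : ∀ j ∈ range m, ∑ t ∈ range d₁,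
        (if Nat.gcd (d₁ * j + t) d₁ = 1 then ζ ^ (d₁ * j + t) else 0)
        = (ζ ^ d₁) ^ j * ∑ t ∈ range d₁, (if Nat.gcd t d₁ = 1 then ζ ^ t else 0) := by
      intro j _
      rw [Finset.mul_sum]
      refine Finset.sum_congr rfl fun t _ => ?_
      have hg : Nat.gcd (d₁ * j + t) d₁ = Nat.gcd t d₁ := by
        conv_lhs => rw [Nat.gcd_comm, Nat.gcd_rec]
        conv_rhs => rw [Nat.gcd_comm, Nat.gcd_rec]
        rw [Nat.mul_add_mod]
      simp only [hg]
      rw [pow_add, pow_mul, mul_ite, mul_zero]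
    rw [Finset.sum_congr rfl this, ← Finset.sum_mul]
    have hprim : IsPrimitiveRoot (ζ ^ d₁) m := hz.pow hd0 hdm
    rw [hprim.geom_sum_eq_zero hm1, zero_mul]
  -- aeval computation
  have key : (Polynomial.aeval ζ) (Fek n) = 0 := by
    have heval : (Polynomial.aeval ζ) (Fek n)
        = ∑ a ∈ (range n).filter (fun a => Nat.gcd a n = 1), ζ ^ a := by
      rw [Fek, map_sum, Finset.sum_filter]
      refine Finset.sum_congr rfl fun a _ => ?_
      split <;> simp
    -- fiberwise over residues mod d
    have hfib : ∑ a ∈ (range n).filter (fun a => Nat.gcd a n = 1), ζ ^ a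
        = ∑ s ∈ range d,
            (((range n).filter (fun a => Nat.gcd a n = 1)).filter
              (fun a => a % d = s)).card • ζ ^ s := by
      rw [← Finset.sum_fiberwise_of_maps_to (g := fun a => a % d)
        (t := range d) (fun a _ => Finset.mem_range.mpr (Nat.mod_lt a hd0))]
      refine Finset.sum_congr rfl fun s _ => ?_
      rw [Finset.sum_congr rfl (fun a ha => ?_), Finset.sum_const]
      obtain ⟨-, ha2⟩ := Finset.mem_filter.mp ha
      calc ζ ^ a = ζ ^ (a % d) := pow_eq_pow_mod a hz.pow_eq_one
        _ = ζ ^ s := by rw [ha2]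
    -- identify fibers with the sets in hequi
    have hfibeq : ∀ s : ℕ,
        ((range n).filter (fun a => Nat.gcd a n = 1)).filter (fun a => a % d = s)
        = (Finset.Icc 1 n).filter (fun a => Nat.gcd a n = 1 ∧ a % d = s) := by
      intro s
      ext a
      simp only [Finset.mem_filter, Finset.mem_range, Finset.mem_Icc]
      constructor
      · rintro ⟨⟨h1, h2⟩, h3⟩
        have : a ≠ 0 := by
          rintro rfl
          rw [Nat.gcd_zero_left] at h2
          omega
        exact ⟨⟨by omega, by omega⟩, h2, h3⟩
      · rintro ⟨⟨h1, h2⟩, h3, h4⟩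
        have : a ≠ n := by
          rintro rfl
          rw [Nat.gcd_self] at h3
          omega
        exact ⟨⟨by omega, h3⟩, h4⟩
    -- restrict to S
    have hout : ∀ s ∈ range d, ((((range n).filter (fun a => Nat.gcd a n = 1)).filter
        (fun a => a % d = s)).card • ζ ^ s ≠ 0) → Nat.gcd s d₁ = 1 := by
      intro s _ hne
      have hcard : (((range n).filter (fun a => Nat.gcd a n = 1)).filter
          (fun a => a % d = s)).card ≠ 0 := by
        intro h0
        rw [h0] at hne
        simp at hne
      obtain ⟨a, ha⟩ := Finset.card_pos.mp (Nat.pos_of_ne_zero hcard)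
      simp only [Finset.mem_filter, Finset.mem_range] at ha
      obtain ⟨⟨-, hcop⟩, hmod⟩ := ha
      have hcop1 : Nat.Coprime a d₁ := (Nat.coprime_iff_gcd_eq_one.mpr hcop).coprime_dvd_right hd₁n
      have : s % d₁ = a % d₁ := by
        rw [← hmod, Nat.mod_mod_of_dvd a hd₁d]
      calc Nat.gcd s d₁ = Nat.gcd d₁ s := Nat.gcd_comm s d₁
        _ = Nat.gcd (s % d₁) d₁ := Nat.gcd_rec d₁ s
        _ = Nat.gcd (a % d₁) d₁ := by rw [this]
        _ = Nat.gcd d₁ a := (Nat.gcd_rec d₁ a).symm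
        _ = 1 := by rw [Nat.gcd_comm]; exact hcop1
    have hres : (Polynomial.aeval ζ) (Fek n)
        = ∑ s ∈ (range d).filter (fun s => Nat.gcd s d₁ = 1),
            (((Finset.Icc 1 n).filter (fun a => Nat.gcd a n = 1 ∧ a % d = s)).card : ℂ)
              * ζ ^ s := by
      rw [heval, hfib, ← Finset.sum_filter_of_ne hout]
      refine Finset.sum_congr rfl fun s _ => ?_
      rw [hfibeq s, nsmul_eq_mul]
    -- multiply through by totient d₁ * d
    have hmul : ((Nat.totient d₁ * d : ℕ) : ℂ) * (Polynomial.aeval ζ) (Fek n) = 0 := by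
      rw [hres, Finset.mul_sum]
      have : ∀ s ∈ (range d).filter (fun s => Nat.gcd s d₁ = 1),
          ((Nat.totient d₁ * d : ℕ) : ℂ)
            * ((((Finset.Icc 1 n).filter (fun a => Nat.gcd a n = 1 ∧ a % d = s)).card : ℂ)
              * ζ ^ s)
          = ((Nat.totient n * d₁ : ℕ) : ℂ) * ζ ^ s := by
        intro s hs
        have := hequi s hs
        rw [← mul_assoc, mul_comm ((Nat.totient d₁ * d : ℕ) : ℂ)]
        congr 1
        exact_mod_cast this
      rw [Finset.sum_congr rfl this, ← Finset.mul_sum, hSsum, mul_zero]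
    have hne : ((Nat.totient d₁ * d : ℕ) : ℂ) ≠ 0 := by
      simp only [ne_eq, Nat.cast_eq_zero, Nat.mul_eq_zero, not_or]
      exact ⟨Nat.totient_pos.mpr hd₁0 |>.ne', by omega⟩
    exact (mul_eq_zero.mp hmul).resolve_left hne
  -- back to ℤ[X]
  have hmin : cyclotomic d ℚ ∣ (Fek n).map (Int.castRingHom ℚ) := by
    rw [cyclotomic_eq_minpoly_rat hz (by omega)]
    apply minpoly.dvd
    rw [show (Int.castRingHom ℚ) = algebraMap ℤ ℚ from rfl,
      Polynomial.aeval_map_algebraMap]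
    exact key
  rw [← map_cyclotomic_int d ℚ] at hmin
  exact (map_dvd_map (Int.castRingHom ℚ) Int.cast_injective
    (cyclotomic.monic d ℤ)).mp hmin
end

section
/- Let n be a positive integer and p a prime with gcd(p, n) = 1. Then F_{np}(x)/(1 - x^{np}) = F_n(x)/(1 - x^n) - F_n(x^p)/(1 - x^{np}) as rational functions; equivalently, (1 - x^n)·F_{np}(x) = (1 - x^{np})·F_n(x) - (1 - x^n)·F_n(x^p) in ℤ[x]. -/
open Polynomial

open Finset in
lemma sum_range_mul' {M : Type*} [AddCommMonoid M] (f : ℕ → M) (n p : ℕ) :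
    ∑ a ∈ Finset.range (n * p), f a = ∑ j ∈ Finset.range p, ∑ b ∈ Finset.range n, f (n * j + b) := by
  induction p with
  | zero => simp
  | succ p ih =>
    have h2 : ∑ a ∈ Ico (n*p) (n*p+n), f a = ∑ b ∈ range n, f (n * p + b) := by
      rw [Finset.sum_Ico_eq_sum_range]; simp
    rw [Finset.sum_range_succ, ← ih, Finset.range_eq_Ico, Nat.mul_succ,
      ← Finset.sum_Ico_consecutive f (Nat.zero_le (n*p)) (Nat.le_add_right _ n),
      h2, ← Finset.range_eq_Ico]

lemma key (n p : ℕ) (hn : 0 < n) (hp : p.Prime) (hcop : Nat.Coprime p n) :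
    Fek (n * p) = (∑ j ∈ Finset.range p, ((X : ℤ[X]) ^ n) ^ j) * Fek n
      - (Fek n).comp (X ^ p) := by
  have hcomp : (Fek n).comp ((X : ℤ[X]) ^ p)
      = ∑ c ∈ Finset.range n, if Nat.gcd c n = 1 then X ^ (p * c) else 0 := by
    simp only [Fek, Polynomial.sum_comp]
    refine Finset.sum_congr rfl fun c _ => ?_
    split
    · simp [← pow_mul]
    · simp
  set f : ℕ → ℤ[X] := fun a => if Nat.gcd a n = 1 then X ^ a else 0 with hf
  have hT : ∑ a ∈ Finset.range (n * p), f a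
      = (∑ j ∈ Finset.range p, ((X : ℤ[X]) ^ n) ^ j) * Fek n := by
    rw [Finset.sum_mul, sum_range_mul' f n p]
    refine Finset.sum_congr rfl fun j _ => ?_
    rw [Fek, Finset.mul_sum]
    refine Finset.sum_congr rfl fun b _ => ?_
    have hg : Nat.gcd (n * j + b) n = Nat.gcd b n := by
      rw [Nat.add_comm, Nat.gcd_add_mul_left_left]
    simp only [hf, hg]
    split
    · rw [← pow_mul, ← pow_add]
    · simp
  have hsplit : ∀ a, f a = (if Nat.gcd a (n * p) = 1 then (X:ℤ[X]) ^ a else 0)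
      + (if Nat.gcd a n = 1 ∧ p ∣ a then (X:ℤ[X]) ^ a else 0) := by
    intro a
    have hiff : Nat.Coprime a (n * p) ↔ Nat.gcd a n = 1 ∧ ¬ p ∣ a := by
      rw [Nat.coprime_mul_iff_right]
      constructor
      · rintro ⟨h1, h2⟩
        exact ⟨h1, hp.coprime_iff_not_dvd.mp h2.symm⟩
      · rintro ⟨h1, h2⟩
        exact ⟨h1, (hp.coprime_iff_not_dvd.mpr h2).symm⟩
    by_cases h1 : Nat.gcd a n = 1
    · by_cases h2 : p ∣ a
      · have hh : ¬ Nat.gcd a (n*p) = 1 := fun h => ((hiff.mp h).2 h2)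
        simp [hf, h1, h2, hh]
      · have hh : Nat.gcd a (n*p) = 1 := hiff.mpr ⟨h1, h2⟩
        simp [hf, h1, h2, hh]
    · have hh : ¬ Nat.gcd a (n*p) = 1 := fun h => h1 (hiff.mp h).1
      simp [hf, h1, hh]
  set g : ℕ → ℤ[X] := fun a => if Nat.gcd a n = 1 ∧ p ∣ a then (X:ℤ[X]) ^ a else 0 with hgdef
  have himg : (Finset.range n).image (fun c => p * c) ⊆ Finset.range (n * p) := by
    intro a ha
    simp only [Finset.mem_image, Finset.mem_range] at ha
    obtain ⟨c, hc, rfl⟩ := ha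
    rw [Finset.mem_range]
    calc p * c < p * n := (Nat.mul_lt_mul_left hp.pos).mpr hc
      _ = n * p := Nat.mul_comm p n
  have hmulsum : ∑ a ∈ Finset.range (n * p), g a = (Fek n).comp (X ^ p) := by
    rw [hcomp]
    rw [← Finset.sum_subset himg]
    · rw [Finset.sum_image (fun x _ y _ h => Nat.eq_of_mul_eq_mul_left hp.pos h)]
      refine Finset.sum_congr rfl fun c hc => ?_
      simp only [hgdef]
      have hgc : Nat.gcd (p * c) n = Nat.gcd c n :=
        Nat.Coprime.gcd_mul_left_cancel c hcop
      by_cases h1 : Nat.gcd c n = 1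
      · simp [hgc, h1]
      · simp [hgc, h1]
    · intro a ha hna
      have hpa : ¬ p ∣ a := by
        rintro ⟨c, rfl⟩
        rw [Finset.mem_range, Nat.mul_comm] at ha
        exact hna (Finset.mem_image.mpr ⟨c, Finset.mem_range.mpr
          (Nat.lt_of_mul_lt_mul_right ha), rfl⟩)
      simp [hgdef, hpa]
  have := Finset.sum_congr rfl (fun a (_ : a ∈ Finset.range (n*p)) => hsplit a)
  rw [Finset.sum_add_distrib] at this
  rw [hT, hmulsum] at this
  rw [Fek]
  rw [this, add_sub_cancel_right]
  
theorem stmt4 (n p : ℕ) (hn : 0 < n) (hp : p.Prime) (hcop : Nat.Coprime p n) :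
    (1 - X ^ n) * Fek (n * p) =
      (1 - X ^ (n * p)) * Fek n - (1 - X ^ n) * (Fek n).comp (X ^ p) := by
  rw [key n p hn hp hcop]
  have hg := geom_sum_mul ((X : ℤ[X]) ^ n) p
  rw [← pow_mul] at hg
  linear_combination (-(Fek n)) * hg
end

section
/- Let n > 1 be a squarefree integer. Then F_n(x)/(1 - x^n) = ∑_{m | n} μ(m)·x^m/(1 - x^m) as rational functions, where the sum runs over all positive divisors m of n and μ is the Möbius function. -/
/-!
Writing the indicator of `gcd(a, n) = 1` as `∑_{d ∣ gcd(a, n)} μ(d)` gives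
`F_n(x) = ∑_{d ∣ n} μ(d) (1 + x^d + ⋯ + x^(n-d)) = ∑_{d ∣ n} μ(d) (1 - x^n) / (1 - x^d)`.
Since `1 / (1 - x^d) = x^d / (1 - x^d) + 1` and `∑_{d ∣ n} μ(d) = 0` for `n > 1`, the identity follows.
-/

open Polynomial

open Finset ArithmeticFunction ArithmeticFunction.Moebius

theorem sum_range_filter_dvd {M : Type*} [AddCommMonoid M] (f : ℕ → M) {d n : ℕ} (hd : d ∣ n) :
    ∑ a ∈ range n with d ∣ a, f a = ∑ j ∈ range (n / d), f (d * j) := by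
  rcases Nat.eq_zero_or_pos d with rfl | hd0
  · simp [Nat.eq_zero_of_zero_dvd hd]
  rw [← sum_image fun i _ j _ h => Nat.eq_of_mul_eq_mul_left hd0 h]
  congr 1
  ext a
  simp only [mem_filter, mem_range, mem_image]
  constructor
  · rintro ⟨ha, j, rfl⟩
    exact ⟨j, (Nat.lt_div_iff_mul_lt' hd j).2 ha, rfl⟩
  · rintro ⟨j, hj, rfl⟩
    exact ⟨(Nat.lt_div_iff_mul_lt' hd j).1 hj, dvd_mul_right d j⟩

theorem sum_divisors_moebius_eq {R : Type*} [Ring R] (n : ℕ) :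
    ∑ d ∈ n.divisors, (μ d : R) = if n = 1 then 1 else 0 := by
  rw [← one_apply, ← coe_moebius_mul_coe_zeta, coe_mul_zeta_apply]
  simp only [intCoe_apply]

theorem sum_range_coprime_eq_sum_divisors_moebius {R : Type*} [CommRing R] (f : ℕ → R) (n : ℕ) :
    ∑ a ∈ range n with a.Coprime n, f a =
      ∑ d ∈ n.divisors, (μ d : R) * ∑ j ∈ range (n / d), f (d * j) := by
  have hcoprime : ∀ a ∈ range n,
      (if a.Coprime n then f a else 0) = ∑ d ∈ n.divisors with d ∣ a, (μ d : R) * f a := by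
    intro a ha
    have hn : n ≠ 0 := by rintro rfl; simp at ha
    have hdvd : {d ∈ n.divisors | d ∣ a} = (a.gcd n).divisors := by
      rw [← Nat.divisors_filter_dvd_of_dvd hn (Nat.gcd_dvd_right a n)]
      exact filter_congr fun d hd => by simp [Nat.dvd_gcd_iff, Nat.dvd_of_mem_divisors hd]
    rw [← sum_mul, hdvd, sum_divisors_moebius_eq]
    simp [Nat.coprime_iff_gcd_eq_one]
  simp_rw [sum_filter, sum_congr rfl hcoprime, sum_filter]
  rw [sum_comm]
  refine sum_congr rfl fun d hd => ?_
  rw [← sum_range_filter_dvd _ (Nat.dvd_of_mem_divisors hd), mul_sum, sum_filter]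

theorem mul_sum_range_pow_mul {R : Type*} [CommRing R] (x : R) {d n : ℕ} (hd : d ∣ n) :
    (1 - x ^ d) * ∑ j ∈ range (n / d), x ^ (d * j) = 1 - x ^ n := by
  simp_rw [pow_mul, mul_neg_geom_sum, ← pow_mul, Nat.mul_div_cancel' hd]

theorem RatFunc.X_pow_ne_one {K : Type*} [Field K] {m : ℕ} (hm : m ≠ 0) :
    (RatFunc.X : RatFunc K) ^ m ≠ 1 := fun h =>
  RatFunc.transcendental_X.pow (Nat.pos_of_ne_zero hm) (h ▸ isAlgebraic_one)

theorem algebraMap_map_Fek (n : ℕ) :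
    algebraMap ℚ[X] (RatFunc ℚ) ((Fek n).map (Int.castRingHom ℚ)) =
      ∑ a ∈ range n with a.Coprime n, RatFunc.X ^ a := by
  simp [Fek, sum_filter, Nat.Coprime, apply_ite, Polynomial.map_sum]

theorem sum_range_coprime_pow_div_one_sub_pow {K : Type*} [Field K] (x : K) {n : ℕ} (hn : n ≠ 1)
    (hx : ∀ m ∈ n.divisors, x ^ m ≠ 1) :
    (∑ a ∈ range n with a.Coprime n, x ^ a) / (1 - x ^ n) =
      ∑ m ∈ n.divisors, (μ m : K) * x ^ m / (1 - x ^ m) := by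
  rcases eq_or_ne n 0 with rfl | hn0
  · simp
  have hsub : ∀ m ∈ n.divisors, 1 - x ^ m ≠ 0 := fun m hm => sub_ne_zero.2 (hx m hm).symm
  have hsub_n := hsub n (Nat.mem_divisors_self n hn0)
  calc (∑ a ∈ range n with a.Coprime n, x ^ a) / (1 - x ^ n)
      = ∑ m ∈ n.divisors, (μ m : K) / (1 - x ^ m) := by
        rw [sum_range_coprime_eq_sum_divisors_moebius, sum_div]
        refine sum_congr rfl fun m hm => ?_
        rw [div_eq_div_iff hsub_n (hsub m hm),
          ← mul_sum_range_pow_mul x (Nat.dvd_of_mem_divisors hm)]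
        ring
    _ = ∑ m ∈ n.divisors, ((μ m : K) * x ^ m / (1 - x ^ m) + μ m) :=
        sum_congr rfl fun m hm => by field_simp [hsub m hm]; ring
    _ = ∑ m ∈ n.divisors, (μ m : K) * x ^ m / (1 - x ^ m) := by
        rw [sum_add_distrib, sum_divisors_moebius_eq, if_neg hn, add_zero]

theorem stmt5_general (n : ℕ) (hn : 1 < n) :
    (algebraMap (Polynomial ℚ) (RatFunc ℚ)) ((Fek n).map (Int.castRingHom ℚ))
        / (1 - RatFunc.X ^ n) =
      ∑ m ∈ n.divisors, ((ArithmeticFunction.moebius m : ℤ) : RatFunc ℚ) * RatFunc.X ^ m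
        / (1 - RatFunc.X ^ m) := by
  rw [algebraMap_map_Fek]
  exact sum_range_coprime_pow_div_one_sub_pow _ hn.ne' fun m hm =>
    RatFunc.X_pow_ne_one (Nat.pos_of_mem_divisors hm).ne'

theorem stmt5 (n : ℕ) (hn : 1 < n) (hsf : Squarefree n) :
    (algebraMap (Polynomial ℚ) (RatFunc ℚ)) ((Fek n).map (Int.castRingHom ℚ))
        / (1 - RatFunc.X ^ n) =
      ∑ m ∈ n.divisors, ((ArithmeticFunction.moebius m : ℤ) : RatFunc ℚ) * RatFunc.X ^ m
        / (1 - RatFunc.X ^ m) :=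
  stmt5_general n hn
end

section
/- Let n > 1 be an integer with radical n₀. Then F_n'(-1) = ∑_{1 ≤ k ≤ n, gcd(k,n)=1} (-1)^{k-1}·k equals n·φ(n)/2 if n is even, and equals μ(n₀)·φ(n₀)/2 if n is odd. -/
open Polynomial

/-!
Differentiating `Fek n` termwise gives `F_n'(-1) = ∑ (-1)^(k-1) k` over the totatives `k` of `n`.
For even `n` every totative is odd, so all signs are `+1`, and pairing `k` with `n - k` gives
`n φ(n) / 2`. For odd `n`, coprimality to `n` is coprimality to its radical `n₀`, and Möbius
inversion over the divisors `d ∣ n₀` turns the sum into `∑ μ(d) d ∑_{j ≤ n/d} (-1)^(j-1) j`: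
as `d` is odd, the sign of `d j` is that of `j`. The inner alternating sum is `(n/d + 1)/2`, so
`2 F_n'(-1) = ∑_{d ∣ n₀} μ(d) (n + d) = ∑_{d ∣ n₀} μ(d) d = ∏_{p ∣ n} (1 - p) = μ(n₀) φ(n₀)`.
-/

open Finset ArithmeticFunction
open scoped ArithmeticFunction.Moebius Nat

lemma eval_neg_one_derivative_Fek (n : ℕ) :
    (derivative (Fek n)).eval (-1) =
      ∑ a ∈ range n with a.Coprime n, (-1 : ℤ) ^ (a - 1) * a := by
  rw [Fek, ← sum_filter, derivative_sum, eval_finsetSum]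
  refine sum_congr rfl fun a _ => ?_
  simp only [derivative_X_pow, eval_mul, eval_C, eval_pow, eval_X]
  ring

lemma filter_coprime_range_eq_Icc {n : ℕ} (hn : n ≠ 1) :
    {a ∈ range n | a.Coprime n} = {a ∈ Icc 1 n | a.Coprime n} := by
  ext a
  simp only [mem_filter, mem_range, mem_Icc, and_congr_left_iff]
  intro ha
  have h0 : a ≠ 0 := by rintro rfl; exact hn (Nat.coprime_zero_left n |>.mp ha)
  have hn' : a ≠ n := by rintro rfl; exact hn (Nat.coprime_self a |>.mp ha)
  omega

lemma card_filter_coprime_Icc {n : ℕ} (hn : n ≠ 1) : #{k ∈ Icc 1 n | k.Coprime n} = φ n := by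
  rw [← filter_coprime_range_eq_Icc hn, Nat.totient_eq_card_coprime]
  simp only [Nat.coprime_comm]

lemma sum_filter_coprime_Icc_reflect {n : ℕ} (hn : n ≠ 1) :
    ∑ k ∈ Icc 1 n with k.Coprime n, ((n - k : ℕ) : ℤ) =
      ∑ k ∈ Icc 1 n with k.Coprime n, (k : ℤ) := by
  have hmaps (k : ℕ) (h1 : 1 ≤ k) (h2 : k ≤ n) (hk : k.Coprime n) :
      (1 ≤ n - k ∧ n - k ≤ n) ∧ (n - k).Coprime n := by
    have : k ≠ n := by rintro rfl; exact hn (Nat.coprime_self k |>.mp hk)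
    exact ⟨by omega, (Nat.coprime_self_sub_left h2).2 hk⟩
  refine sum_nbij' (n - ·) (n - ·) ?_ ?_ ?_ ?_ fun _ _ => rfl <;>
    simp only [mem_filter, mem_Icc, and_imp]
  any_goals exact hmaps
  all_goals intro k _ hk _; omega

lemma two_mul_sum_filter_coprime_Icc {n : ℕ} (hn : n ≠ 1) :
    2 * ∑ k ∈ Icc 1 n with k.Coprime n, (k : ℤ) = n * φ n := by
  rw [two_mul]
  nth_rewrite 1 [← sum_filter_coprime_Icc_reflect hn]
  rw [← sum_add_distrib, sum_congr rfl fun k hk => ?_, sum_const, card_filter_coprime_Icc hn,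
    nsmul_eq_mul, mul_comm]
  have := (mem_Icc.1 (mem_filter.1 hk).1).2
  omega

lemma neg_one_pow_sub_one_of_coprime_of_even {R : Type*} [Monoid R] [HasDistribNeg R] {n k : ℕ}
    (hn : Even n) (hk : k.Coprime n) : (-1 : R) ^ (k - 1) = 1 :=
  (Nat.Odd.sub_odd (hk.coprime_dvd_right hn.two_dvd).odd_of_right odd_one).neg_one_pow

lemma four_mul_sum_Icc_alternating {R : Type*} [CommRing R] (m : ℕ) :
    4 * ∑ j ∈ Icc 1 m, (-1 : R) ^ (j - 1) * j = 1 - (-1) ^ m * (2 * m + 1) := by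
  induction m with
  | zero => simp
  | succ m ih =>
    rw [sum_Icc_succ_top (by omega), mul_add, ih, Nat.add_sub_cancel]
    push_cast
    ring

lemma neg_one_pow_mul_sub_one_of_odd {R : Type*} [Monoid R] [HasDistribNeg R] {d : ℕ}
    (hd : Odd d) (j : ℕ) : (-1 : R) ^ (d * j - 1) = (-1) ^ (j - 1) := by
  obtain ⟨t, rfl⟩ := hd
  rcases j with _ | j
  · simp
  · rw [show (2 * t + 1) * (j + 1) - 1 = 2 * (t * (j + 1)) + j by ring_nf; omega, pow_add, pow_mul]
    simp

lemma sum_divisors_moebius {R : Type*} [Ring R] (m : ℕ) :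
    ∑ d ∈ m.divisors, (μ d : R) = if m = 1 then 1 else 0 := by
  simpa only [intCoe_apply, coe_moebius_mul_coe_zeta, one_apply, eq_comm] using
    coe_mul_zeta_apply (f := (μ : ArithmeticFunction R)) (x := m)

lemma sum_divisors_filter_dvd_moebius {R : Type*} [Ring R] {m : ℕ} (hm : m ≠ 0) (k : ℕ) :
    ∑ d ∈ m.divisors with d ∣ k, (μ d : R) = if k.Coprime m then 1 else 0 := by
  rw [filter_congr (q := (· ∣ m.gcd k)) fun d hd => by
      simp [Nat.dvd_gcd_iff, Nat.dvd_of_mem_divisors hd],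
    Nat.divisors_filter_dvd_of_dvd hm (Nat.gcd_dvd_left m k), sum_divisors_moebius]
  exact if_congr Nat.coprime_comm rfl rfl

lemma Icc_filter_dvd_eq_map {d : ℕ} (hd : 0 < d) (N : ℕ) :
    {k ∈ Icc 1 N | d ∣ k} = (Icc 1 (N / d)).map ⟨(d * ·), mul_right_injective₀ hd.ne'⟩ := by
  ext k
  simp only [mem_filter, mem_Icc, mem_map, Function.Embedding.coeFn_mk]
  constructor
  · rintro ⟨⟨h1, h2⟩, j, rfl⟩
    refine ⟨j, ⟨?_, (Nat.le_div_iff_mul_le hd).2 (by linarith)⟩, rfl⟩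
    exact Nat.one_le_iff_ne_zero.2 (by rintro rfl; omega)
  · rintro ⟨j, ⟨h1, h2⟩, rfl⟩
    refine ⟨⟨Nat.one_le_iff_ne_zero.2 (by positivity), ?_⟩, dvd_mul_right d j⟩
    have := (Nat.le_div_iff_mul_le hd).1 h2
    linarith

lemma sum_filter_coprime_Icc_eq_sum_divisors {R : Type*} [CommRing R] (f : ℕ → R) {m : ℕ}
    (hm : m ≠ 0) (N : ℕ) :
    ∑ k ∈ Icc 1 N with k.Coprime m, f k =
      ∑ d ∈ m.divisors, μ d * ∑ j ∈ Icc 1 (N / d), f (d * j) := by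
  calc ∑ k ∈ Icc 1 N with k.Coprime m, f k
      = ∑ k ∈ Icc 1 N, ∑ d ∈ m.divisors with d ∣ k, μ d * f k := by
        rw [sum_filter]
        refine sum_congr rfl fun k _ => ?_
        rw [← sum_mul, sum_divisors_filter_dvd_moebius hm, ite_mul, one_mul, zero_mul]
    _ = ∑ d ∈ m.divisors, ∑ k ∈ Icc 1 N with d ∣ k, μ d * f k := by
        simp_rw [sum_filter]
        exact sum_comm
    _ = _ := by
        refine sum_congr rfl fun d hd => ?_
        rw [← mul_sum, Icc_filter_dvd_eq_map (Nat.pos_of_mem_divisors hd), sum_map]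
        rfl

lemma two_mul_sum_filter_coprime_Icc_alternating_of_odd {n m : ℕ} (hn : Odd n) (hm : m ∣ n) :
    2 * ∑ k ∈ Icc 1 n with k.Coprime m, (-1 : ℤ) ^ (k - 1) * k =
      ∑ d ∈ m.divisors, μ d * (n + d) := by
  rw [sum_filter_coprime_Icc_eq_sum_divisors _ (ne_zero_of_dvd_ne_zero hn.pos.ne' hm), mul_sum]
  refine sum_congr rfl fun d hd => ?_
  have hdn : d ∣ n := (Nat.dvd_of_mem_divisors hd).trans hm
  have h4 := four_mul_sum_Icc_alternating (R := ℤ) (n / d)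
  rw [(hn.of_dvd_nat (Nat.div_dvd_of_dvd hdn)).neg_one_pow] at h4
  have h2 : 2 * ∑ j ∈ Icc 1 (n / d), (-1 : ℤ) ^ (j - 1) * j = (n / d : ℕ) + 1 := by linarith
  have hnd : (d : ℤ) * (n / d : ℕ) = n := by exact_mod_cast Nat.mul_div_cancel' hdn
  simp_rw [neg_one_pow_mul_sub_one_of_odd (hn.of_dvd_nat hdn), Nat.cast_mul,
    mul_left_comm _ (d : ℤ), ← mul_sum]
  linear_combination (μ d : ℤ) * d * h2 + (μ d : ℤ) * hnd

lemma sum_divisors_moebius_mul_self_of_squarefree {m : ℕ} (hm : Squarefree m) :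
    ∑ d ∈ m.divisors, (μ d : ℤ) * d = μ m * φ m := by
  have hsum := isMultiplicative_id.natCast.prodPrimeFactors_one_sub_of_squarefree
    (R := ℤ) _ hm
  simp only [natCoe_apply, id_apply, Int.cast_id] at hsum
  rw [← hsum, ← isMultiplicative_moebius.prod_primeFactors hm, Nat.totient_eq_div_primeFactors_mul,
    Nat.prod_primeFactors_of_squarefree hm, Nat.div_self (Nat.pos_of_ne_zero hm.ne_zero), one_mul]
  push_cast
  rw [← prod_mul_distrib]
  refine prod_congr rfl fun p hp => ?_
  have hp := Nat.prime_of_mem_primeFactors hp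
  rw [moebius_apply_prime hp, Nat.cast_sub hp.one_le]
  push_cast
  ring

lemma squarefree_prod_primeFactors (n : ℕ) : Squarefree (∏ p ∈ n.primeFactors, p) :=
  Finset.squarefree_prod_of_pairwise_isCoprime
    (fun _ hp _ hq hpq => Nat.coprime_iff_isRelPrime.1 <| (Nat.coprime_primes
      (Nat.prime_of_mem_primeFactors hp) (Nat.prime_of_mem_primeFactors hq)).2 hpq)
    fun _ hp => (Nat.prime_of_mem_primeFactors hp).squarefree

lemma coprime_prod_primeFactors_iff {k n : ℕ} (hk : k ≠ 0) (hn : n ≠ 0) :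
    k.Coprime (∏ p ∈ n.primeFactors, p) ↔ k.Coprime n := by
  rw [← Nat.disjoint_primeFactors hk hn,
    ← Nat.disjoint_primeFactors hk (ne_zero_of_dvd_ne_zero hn (Nat.prod_primeFactors_dvd n)),
    Nat.primeFactors_prod_primeFactors]

lemma prod_primeFactors_ne_one {n : ℕ} (hn : 1 < n) : ∏ p ∈ n.primeFactors, p ≠ 1 := by
  intro h
  have := Nat.primeFactors_prod_primeFactors n
  rw [h, Nat.primeFactors_one, eq_comm, Nat.primeFactors_eq_empty] at this
  omega

theorem stmt6 (n : ℕ) (hn : 1 < n) (n₀ : ℕ) (hn₀ : n₀ = ∏ p ∈ n.primeFactors, p) :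
    ((derivative (Fek n)).eval (-1) =
      ∑ k ∈ (Finset.Icc 1 n).filter (fun k => Nat.gcd k n = 1), (-1 : ℤ) ^ (k - 1) * k) ∧
    (Even n → 2 * (derivative (Fek n)).eval (-1) = (n : ℤ) * (n.totient : ℤ)) ∧
    (Odd n → 2 * (derivative (Fek n)).eval (-1) =
      (ArithmeticFunction.moebius n₀ : ℤ) * (n₀.totient : ℤ)) := by
  have hF : (derivative (Fek n)).eval (-1) =
      ∑ k ∈ Icc 1 n with k.Coprime n, (-1 : ℤ) ^ (k - 1) * k := by
    rw [eval_neg_one_derivative_Fek, filter_coprime_range_eq_Icc hn.ne']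
  refine ⟨hF, fun hev => ?_, fun hodd => ?_⟩
  · rw [hF, ← two_mul_sum_filter_coprime_Icc hn.ne']
    congr 1
    refine sum_congr rfl fun k hk => ?_
    rw [neg_one_pow_sub_one_of_coprime_of_even hev (mem_filter.1 hk).2, one_mul]
  · have hcop : ∀ k ∈ Icc 1 n, k.Coprime n ↔ k.Coprime n₀ := fun k hk =>
      hn₀ ▸ (coprime_prod_primeFactors_iff (by have := (mem_Icc.1 hk).1; omega) (by omega)).symm
    rw [hF, filter_congr hcop, two_mul_sum_filter_coprime_Icc_alternating_of_odd hodd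
      (hn₀ ▸ Nat.prod_primeFactors_dvd n)]
    have hμ : ∑ d ∈ n₀.divisors, μ d = 0 := by
      simpa [hn₀ ▸ prod_primeFactors_ne_one hn] using sum_divisors_moebius (R := ℤ) n₀
    rw [sum_congr rfl fun d _ => mul_add _ _ _, sum_add_distrib, ← sum_mul, hμ, zero_mul, zero_add]
    exact sum_divisors_moebius_mul_self_of_squarefree (hn₀ ▸ squarefree_prod_primeFactors n)
end

section
/- Let r be a prime factor of a positive squarefree integer n, and suppose d is an integer with d > 1, d | (r-1), and d ∤ n. Then the d-th cyclotomic polynomial Φ_d divides F_n in ℤ[x]. -/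
open Polynomial

theorem stmt7 (n r d : ℕ) (hn : Squarefree n) (hr : r.Prime) (hrn : r ∣ n)
    (hd : 1 < d) (hdr : d ∣ r - 1) (hnd : ¬ d ∣ n) :
    cyclotomic d ℤ ∣ Fek n := by
  obtain ⟨m, hm⟩ := hrn
  have hd0 : d ≠ 0 := by omega
  have hdpos : 0 < d := by omega
  have hn0 : n ≠ 0 := hn.ne_zero
  have hr0 : 0 < r := hr.pos
  have hr1 : 1 ≤ r := hr.one_lt.le
  have hm0 : 0 < m := by
    rcases Nat.eq_zero_or_pos m with h | h
    · exfalso; rw [h, mul_zero] at hm; exact hn0 hm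
    · exact h
  have hsq : Squarefree (r * m) := hm ▸ hn
  have hcop : Nat.Coprime r m := (Nat.squarefree_mul_iff.mp hsq).1
  have hdm : ¬ d ∣ m := fun h => hnd (hm ▸ h.mul_left r)
  set ζ := Complex.exp (2 * Real.pi * Complex.I / d) with hζdef
  have hζ : IsPrimitiveRoot ζ d := Complex.isPrimitiveRoot_exp d hd0
  have hmin : cyclotomic d ℤ = minpoly ℤ ζ := cyclotomic_eq_minpoly hζ hdpos
  rw [hmin]
  apply minpoly.isIntegrallyClosed_dvd (hζ.isIntegral hdpos)
  -- basic facts about ζ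
  have hζr1 : ζ ^ (r - 1) = 1 := by
    obtain ⟨t, ht⟩ := hdr
    rw [ht, pow_mul, hζ.pow_eq_one, one_pow]
  have hζm1 : ζ ^ m ≠ 1 := fun h => hdm ((hζ.pow_eq_one_iff_dvd m).mp h)
  -- ζ ^ (r * c) = ζ ^ c
  have hpow : ∀ c : ℕ, ζ ^ (r * c) = ζ ^ c := by
    intro c
    have h1 : r * c = c + (r - 1) * c := by
      cases' Nat.exists_eq_add_of_le hr1 with s hs
      subst hs
      simp [Nat.add_sub_cancel_left]
      ring
    rw [h1, pow_add, pow_mul, hζr1, one_pow, mul_one]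
  -- the common value F = Fekete sum mod m evaluated at ζ
  set F : ℂ := ∑ c ∈ Finset.range m, if Nat.Coprime c m then ζ ^ c else 0 with hF
  -- the sum to compute
  have hFek : (aeval ζ) (Fek n) =
      ∑ a ∈ Finset.range n, if Nat.gcd a n = 1 then ζ ^ a else 0 := by
    simp [Fek, apply_ite (aeval ζ)]
  rw [hFek]
  -- split the indicator
  have hsplit : ∀ a : ℕ,
      (if Nat.gcd a n = 1 then ζ ^ a else 0) =
        (if Nat.Coprime a m then ζ ^ a else 0)
          - (if r ∣ a ∧ Nat.Coprime a m then ζ ^ a else 0) := by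
    intro a
    have hiff : Nat.gcd a n = 1 ↔ (¬ r ∣ a ∧ Nat.Coprime a m) := by
      have h2 : Nat.Coprime a n ↔ Nat.Coprime a r ∧ Nat.Coprime a m := by
        rw [hm]; exact Nat.coprime_mul_iff_right
      rw [show (Nat.gcd a n = 1) ↔ Nat.Coprime a n from Iff.rfl, h2,
        Nat.coprime_comm, hr.coprime_iff_not_dvd]
    by_cases h1 : Nat.Coprime a m <;> by_cases h2 : r ∣ a <;>
      simp [hiff, h1, h2]
  rw [Finset.sum_congr rfl fun a _ => hsplit a, Finset.sum_sub_distrib]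
  -- first sum equals F
  have hT1 : (∑ a ∈ Finset.range n, if Nat.Coprime a m then ζ ^ a else 0) = F := by
    have hre : (∑ a ∈ Finset.range n, if Nat.Coprime a m then ζ ^ a else 0) =
        ∑ p ∈ Finset.range r ×ˢ Finset.range m,
          (if Nat.Coprime p.2 m then ζ ^ (m * p.1 + p.2) else 0) := by
      apply Finset.sum_nbij' (fun a => (a / m, a % m)) (fun p => m * p.1 + p.2)
      · intro a ha
        simp only [Finset.mem_range, Finset.mem_product] at *
        refine ⟨?_, Nat.mod_lt _ hm0⟩
        rw [hm, mul_comm r m] at ha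
        exact Nat.div_lt_of_lt_mul ha
      · intro p hp
        simp only [Finset.mem_range, Finset.mem_product] at *
        rw [hm]
        calc m * p.1 + p.2 < m * p.1 + m := by omega
          _ = m * (p.1 + 1) := by ring
          _ ≤ m * r := Nat.mul_le_mul_left m hp.1
          _ = r * m := mul_comm m r
      · intro a _
        exact Nat.div_add_mod a m
      · intro p hp
        simp only [Finset.mem_range, Finset.mem_product] at hp
        have h1 : (m * p.1 + p.2) / m = p.1 := by
          rw [Nat.mul_add_div hm0, Nat.div_eq_of_lt hp.2, add_zero]
        have h2 : (m * p.1 + p.2) % m = p.2 := by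
          rw [Nat.mul_add_mod, Nat.mod_eq_of_lt hp.2]
        exact Prod.ext h1 h2
      · intro a _
        have hg : Nat.Coprime (a % m) m ↔ Nat.Coprime a m := by
          conv_rhs => rw [← Nat.div_add_mod a m]
          unfold Nat.Coprime
          rw [add_comm, Nat.gcd_add_mul_left_left]
        rw [← Nat.div_add_mod a m] at *
        simp only [Nat.mul_add_div hm0, Nat.mul_add_mod]
        rw [Nat.div_eq_of_lt (Nat.mod_lt _ hm0), Nat.mod_eq_of_lt (Nat.mod_lt _ hm0), add_zero]
        congr 1
        · rw [eq_iff_iff]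
          unfold Nat.Coprime
          rw [add_comm, Nat.gcd_add_mul_left_left]
    rw [hre, Finset.sum_product]
    have hgeom : (∑ k ∈ Finset.range r, (ζ ^ m) ^ k) = 1 := by
      have h1 := geom_sum_mul (ζ ^ m) r
      have h2 : (ζ ^ m) ^ r = ζ ^ m := by
        rw [← pow_mul, mul_comm m r, hpow]
      rw [h2] at h1
      have h3 : ζ ^ m - 1 ≠ 0 := sub_ne_zero.mpr hζm1
      have := mul_right_cancel₀ h3 (h1.trans (one_mul (ζ ^ m - 1)).symm)
      exact this
    calc (∑ k ∈ Finset.range r, ∑ b ∈ Finset.range m,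
            if Nat.Coprime b m then ζ ^ (m * k + b) else 0)
        = ∑ k ∈ Finset.range r, (ζ ^ m) ^ k * F := by
          apply Finset.sum_congr rfl
          intro k _
          rw [hF, Finset.mul_sum]
          apply Finset.sum_congr rfl
          intro b _
          rw [mul_ite, mul_zero, pow_add, pow_mul]
      _ = (∑ k ∈ Finset.range r, (ζ ^ m) ^ k) * F := by rw [Finset.sum_mul]
      _ = F := by rw [hgeom, one_mul]
  -- second sum equals F
  have hT2 : (∑ a ∈ Finset.range n, if r ∣ a ∧ Nat.Coprime a m then ζ ^ a else 0) = F := by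
    have hsub : (Finset.range m).image (fun c => r * c) ⊆ Finset.range n := by
      intro a ha
      simp only [Finset.mem_image, Finset.mem_range] at *
      obtain ⟨c, hc, rfl⟩ := ha
      rw [hm]
      exact (Nat.mul_lt_mul_left hr0).mpr hc
    rw [← Finset.sum_subset hsub ?zero]
    case zero =>
      intro a ha hna
      simp only [Finset.mem_image, Finset.mem_range] at *
      rw [if_neg]
      rintro ⟨⟨c, rfl⟩, -⟩
      exact hna ⟨c, by rw [hm] at ha; exact lt_of_mul_lt_mul_left ha (Nat.zero_le r), rfl⟩
    rw [Finset.sum_image (fun a _ b _ h => Nat.eq_of_mul_eq_mul_left hr0 h)]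
    rw [hF]
    apply Finset.sum_congr rfl
    intro c _
    have h1 : (r ∣ r * c ∧ Nat.Coprime (r * c) m) ↔ Nat.Coprime c m := by
      constructor
      · rintro ⟨-, h⟩
        exact (Nat.coprime_mul_iff_left.mp h).2
      · intro h
        exact ⟨Dvd.intro c rfl, Nat.coprime_mul_iff_left.mpr ⟨hcop, h⟩⟩
    rw [hpow c]
    simp only [h1]
  rw [hT1, hT2, sub_self]
end

section
/- Suppose n = 2^s·p₁·p₂···p_r where s ∈ {0,1} and p₁, …, p_r are distinct odd primes all congruent to 3 mod 4. Let i denote a primitive 4th root of unity in ℂ. Then F_n(i)/(1 - i^n) = 2^{r-1}·i. In particular, F_n(i) ≠ 0, so Φ_4 does not divide F_n. -/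
open Polynomial

open Finset Complex
open Finset Complex

lemma Ipow_mod (a : ℕ) : Complex.I ^ a = Complex.I ^ (a % 4) := by
  conv_lhs => rw [← Nat.div_add_mod a 4]
  rw [pow_add, pow_mul, Complex.I_pow_four, one_pow, one_mul]

lemma Ipow_p {p : ℕ} (hp : p % 4 = 3) : Complex.I ^ p = -Complex.I := by
  rw [Ipow_mod, hp]
  rw [pow_succ, Complex.I_sq]
  ring

lemma Ipow_prod (S : Finset ℕ) (h : ∀ p ∈ S, p % 4 = 3) :
    Complex.I ^ (∏ p ∈ S, p) = (-1) ^ S.card * Complex.I := by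
  induction S using Finset.induction_on with
  | empty => simp
  | @insert p S hpS ih =>
    have hp4 : p % 4 = 3 := h p (Finset.mem_insert_self p S)
    have hpodd : Odd p := Nat.odd_iff.mpr (by omega)
    rw [Finset.prod_insert hpS, mul_comm p, pow_mul,
      ih (fun q hq => h q (Finset.mem_insert_of_mem hq)), mul_pow, Ipow_p hp4, ← pow_mul,
      Finset.card_insert_of_notMem hpS]
    have hk : (-1 : ℂ) ^ (S.card * p) = (-1) ^ S.card := by
      rcases Nat.even_or_odd S.card with he | ho
      · rw [he.neg_one_pow, (he.mul_right p).neg_one_pow]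
      · rw [ho.neg_one_pow, (ho.mul hpodd).neg_one_pow]
    rw [hk, pow_succ]
    ring

lemma odd_prod {S : Finset ℕ} (h : ∀ p ∈ S, p % 4 = 3) : Odd (∏ p ∈ S, p) := by
  rw [Nat.odd_iff, ← Nat.not_even_iff, even_iff_two_dvd]
  intro h2
  obtain ⟨p, hpS, hp2⟩ := (Nat.prime_two.prime.dvd_finset_prod_iff _).mp h2
  have h4 := h p hpS
  omega
open Finset Complex

-- coprimality via prime factors
lemma fekGcdIff (n a : ℕ) (hn0 : n ≠ 0) :
    Nat.gcd a n = 1 ↔ ∀ p ∈ n.primeFactors, ¬ p ∣ a := by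
  constructor
  · intro h p hp hpa
    obtain ⟨hpp, hpn, -⟩ := Nat.mem_primeFactors.mp hp
    have : p ∣ 1 := h ▸ Nat.dvd_gcd hpa hpn
    exact hpp.one_lt.ne' (Nat.dvd_one.mp this)
  · intro h
    by_contra hg
    obtain ⟨p, pp, pa, pn⟩ := Nat.Prime.not_coprime_iff_dvd.mp hg
    exact h p (Nat.mem_primeFactors.mpr ⟨pp, pn, hn0⟩) pa

lemma fekIndicator (n a : ℕ) (hn0 : n ≠ 0) :
    (if Nat.gcd a n = 1 then (1:ℂ) else 0) =
      ∑ S ∈ n.primeFactors.powerset, (-1) ^ S.card * (if (∏ p ∈ S, p) ∣ a then 1 else 0) := by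
  have key : ∀ S ∈ n.primeFactors.powerset,
      ((-1:ℂ)) ^ S.card * (if (∏ p ∈ S, p) ∣ a then 1 else 0) =
        (∏ p ∈ S, (-(if p ∣ a then (1:ℂ) else 0))) * ∏ p ∈ n.primeFactors \ S, (1:ℂ) := by
    intro S hS
    have hSsub := Finset.mem_powerset.mp hS
    have hprimes : ∀ p ∈ S, Nat.Prime p := fun p hp =>
      (Nat.mem_primeFactors.mp (hSsub hp)).1
    have hdvd : (∏ p ∈ S, p) ∣ a ↔ ∀ p ∈ S, p ∣ a := by
      constructor
      · intro h p hp
        exact dvd_trans (Finset.dvd_prod_of_mem _ hp) h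
      · intro h
        exact Finset.prod_primes_dvd a (fun p hp => (hprimes p hp).prime) h
    have hneg : (∏ p ∈ S, (-(if p ∣ a then (1:ℂ) else 0))) =
        (-1) ^ S.card * ∏ p ∈ S, (if p ∣ a then (1:ℂ) else 0) := by
      rw [Finset.prod_congr rfl (fun p _ => (neg_one_mul (if p ∣ a then (1:ℂ) else 0)).symm),
        Finset.prod_mul_distrib, Finset.prod_const]
    rw [hneg, Finset.prod_boole, Finset.prod_const_one, mul_one]
    simp only [hdvd]
  rw [Finset.sum_congr rfl key, ← Finset.prod_add]
  have : ∀ p ∈ n.primeFactors, (-(if p ∣ a then (1:ℂ) else 0) + 1) = (if ¬ p ∣ a then 1 else 0) := by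
    intro p _
    by_cases h : p ∣ a <;> simp [h]
  rw [Finset.prod_congr rfl this, Finset.prod_boole]
  by_cases h : Nat.gcd a n = 1
  · rw [if_pos h, if_pos ((fekGcdIff n a hn0).mp h)]
  · rw [if_neg h, if_neg (fun hh => h ((fekGcdIff n a hn0).mpr hh))]

lemma fekInnerSum (n d : ℕ) (hd : d ∣ n) (hd0 : d ≠ 0) :
    ∑ a ∈ Finset.range n, (if d ∣ a then Complex.I ^ a else 0) =
      ∑ b ∈ Finset.range (n / d), (Complex.I ^ d) ^ b := by
  rw [← Finset.sum_filter]
  refine Finset.sum_nbij' (fun a => a / d) (fun b => d * b) ?_ ?_ ?_ ?_ ?_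
  · intro a ha
    simp only [Finset.mem_filter, Finset.mem_range] at ha ⊢
    exact Nat.div_lt_div_of_lt_of_dvd hd ha.1
  · intro b hb
    simp only [Finset.mem_filter, Finset.mem_range] at hb ⊢
    constructor
    · calc d * b < d * (n / d) := (Nat.mul_lt_mul_left (Nat.pos_of_ne_zero hd0)).mpr hb
        _ = n := Nat.mul_div_cancel' hd
    · exact Dvd.intro b rfl
  · intro a ha
    simp only [Finset.mem_filter] at ha
    exact Nat.mul_div_cancel' ha.2
  · intro b hb
    exact Nat.mul_div_cancel_left b (Nat.pos_of_ne_zero hd0)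
  · intro a ha
    simp only [Finset.mem_filter] at ha
    rw [← pow_mul, Nat.mul_div_cancel' ha.2]
open Finset Complex

lemma I_ne_one' : Complex.I ≠ 1 := by
  simp [Complex.ext_iff]

lemma negI_ne_one : (-Complex.I) ≠ 1 := by
  simp [Complex.ext_iff]

lemma signI_ne_one (k : ℕ) : ((-1:ℂ)) ^ k * Complex.I ≠ 1 := by
  rcases Nat.even_or_odd k with he | ho
  · rw [he.neg_one_pow, one_mul]; exact I_ne_one'
  · rw [ho.neg_one_pow, neg_one_mul]; exact negI_ne_one

lemma den_ne (k : ℕ) : (1:ℂ) - (-1) ^ k * Complex.I ≠ 0 :=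
  sub_ne_zero.mpr (fun h => signI_ne_one k h.symm)

lemma sumA (P : Finset ℕ) (h4 : ∀ p ∈ P, p % 4 = 3) (hPne : P.Nonempty) :
    ∑ S ∈ P.powerset, ((-1:ℂ)) ^ S.card / (1 - Complex.I ^ (∏ p ∈ S, p)) =
      2 ^ (P.card - 1) * Complex.I := by
  have hterm : ∀ S ∈ P.powerset,
      ((-1:ℂ)) ^ S.card / (1 - Complex.I ^ (∏ p ∈ S, p)) =
        (Complex.I + (-1) ^ S.card) / 2 := by
    intro S hS
    rw [Ipow_prod S (fun p hp => h4 p (Finset.mem_powerset.mp hS hp))]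
    rw [div_eq_div_iff (den_ne S.card) two_ne_zero]
    have hc : ((-1:ℂ) ^ S.card) ^ 2 = 1 := by
      rw [← pow_mul, mul_comm, pow_mul, neg_one_sq, one_pow]
    linear_combination ((-1:ℂ) ^ S.card) * Complex.I_sq + Complex.I * hc
  rw [Finset.sum_congr rfl hterm, ← Finset.sum_div, Finset.sum_add_distrib,
    Finset.sum_const, Finset.card_powerset]
  have hzero : ∑ S ∈ P.powerset, ((-1:ℂ)) ^ S.card = 0 := by
    have h := Finset.sum_powerset_neg_one_pow_card_of_nonempty hPne
    calc ∑ S ∈ P.powerset, ((-1:ℂ)) ^ S.card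
        = ((∑ S ∈ P.powerset, (-1:ℤ) ^ S.card : ℤ) : ℂ) := by push_cast; rfl
      _ = 0 := by rw [h]; exact Int.cast_zero
  rw [hzero, add_zero, nsmul_eq_mul]
  have hcard : P.card - 1 + 1 = P.card := Nat.succ_pred_eq_of_pos hPne.card_pos
  rw [← hcard, pow_succ]
  push_cast
  ring
lemma fekEvalI (n : ℕ) :
    ((Fek n).map (Int.castRingHom ℂ)).eval Complex.I =
      ∑ a ∈ Finset.range n, (if Nat.gcd a n = 1 then Complex.I ^ a else 0) := by
  simp [Fek, Polynomial.map_sum, apply_ite (Polynomial.map (Int.castRingHom ℂ)),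
    Polynomial.eval_finset_sum, apply_ite (Polynomial.eval Complex.I)]

lemma fekKey (n : ℕ) (hn0 : n ≠ 0)
    (hne : ∀ S ∈ n.primeFactors.powerset, Complex.I ^ (∏ p ∈ S, p) ≠ 1)
    (hnn : Complex.I ^ n ≠ 1) :
    ((Fek n).map (Int.castRingHom ℂ)).eval Complex.I =
      (1 - Complex.I ^ n) *
        ∑ S ∈ n.primeFactors.powerset, (-1) ^ S.card / (1 - Complex.I ^ (∏ p ∈ S, p)) := by
  rw [fekEvalI]
  have step1 : ∀ a ∈ Finset.range n,
      (if Nat.gcd a n = 1 then Complex.I ^ a else 0) =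
        ∑ S ∈ n.primeFactors.powerset, (-1) ^ S.card * (if (∏ p ∈ S, p) ∣ a then Complex.I ^ a else 0) := by
    intro a _
    have h1 := congrArg (· * Complex.I ^ a) (fekIndicator n a hn0)
    simp only [Finset.sum_mul, ite_mul, one_mul, zero_mul, mul_assoc] at h1
    exact h1
  rw [Finset.sum_congr rfl step1, Finset.sum_comm]
  rw [Finset.mul_sum]
  refine Finset.sum_congr rfl ?_
  intro S hS
  have hSsub := Finset.mem_powerset.mp hS
  have hprimes : ∀ p ∈ S, Nat.Prime p := fun p hp => (Nat.mem_primeFactors.mp (hSsub hp)).1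
  have hdn : (∏ p ∈ S, p) ∣ n :=
    Finset.prod_primes_dvd n (fun p hp => (hprimes p hp).prime)
      (fun p hp => (Nat.mem_primeFactors.mp (hSsub hp)).2.1)
  have hd0 : (∏ p ∈ S, p) ≠ 0 := (Finset.prod_pos (fun p hp => (hprimes p hp).pos)).ne'
  rw [← Finset.mul_sum, fekInnerSum n _ hdn hd0, geom_sum_eq (hne S hS), ← pow_mul,
    Nat.mul_div_cancel' hdn]
  have ha : Complex.I ^ (∏ p ∈ S, p) - 1 ≠ 0 := sub_ne_zero.mpr (hne S hS)
  have ha' : (1:ℂ) - Complex.I ^ (∏ p ∈ S, p) ≠ 0 := sub_ne_zero.mpr (fun h => (hne S hS) h.symm)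
  have hb : (1:ℂ) - Complex.I ^ n ≠ 0 := sub_ne_zero.mpr (fun h => hnn h.symm)
  field_simp
  ring

theorem stmt10 (s : ℕ) (hs : s ≤ 1) (P : Finset ℕ)
    (hP : ∀ p ∈ P, Nat.Prime p ∧ p % 4 = 3) (hPne : P.Nonempty)
    (n : ℕ) (hn : n = 2 ^ s * ∏ p ∈ P, p) :
    ((Fek n).map (Int.castRingHom ℂ)).eval Complex.I / (1 - Complex.I ^ n) =
      2 ^ (P.card - 1) * Complex.I ∧
    ((Fek n).map (Int.castRingHom ℂ)).eval Complex.I ≠ 0 ∧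
    ¬ (cyclotomic 4 ℤ ∣ Fek n) := by
  have hprimes : ∀ p ∈ P, Nat.Prime p := fun p hp => (hP p hp).1
  have h4 : ∀ p ∈ P, p % 4 = 3 := fun p hp => (hP p hp).2
  have h2P : 2 ∉ P := fun h => by have := h4 2 h; omega
  have hm0 : (∏ p ∈ P, p) ≠ 0 :=
    (Finset.prod_pos (fun p hp => (hprimes p hp).pos)).ne'
  have hn0 : n ≠ 0 := by
    rw [hn]; positivity
  -- main computation
  have main : ((Fek n).map (Int.castRingHom ℂ)).eval Complex.I =
      (1 - Complex.I ^ n) * (2 ^ (P.card - 1) * Complex.I) ∧ Complex.I ^ n ≠ 1 := by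
    interval_cases s
    · -- s = 0
      rw [pow_zero, one_mul] at hn
      subst hn
      have hQ : (∏ p ∈ P, p).primeFactors = P := Nat.primeFactors_prod hprimes
      have hne : ∀ S ∈ (∏ p ∈ P, p).primeFactors.powerset,
          Complex.I ^ (∏ p ∈ S, p) ≠ 1 := by
        intro S hS
        rw [hQ] at hS
        rw [Ipow_prod S (fun p hp => h4 p (Finset.mem_powerset.mp hS hp))]
        exact signI_ne_one _
      have hnn : Complex.I ^ (∏ p ∈ P, p) ≠ 1 := by
        rw [Ipow_prod P h4]; exact signI_ne_one _
      refine ⟨?_, hnn⟩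
      rw [fekKey _ hm0 hne hnn, hQ, sumA P h4 hPne]
    · -- s = 1
      rw [pow_one] at hn
      subst hn
      have hQ : (2 * ∏ p ∈ P, p).primeFactors = insert 2 P := by
        rw [Nat.primeFactors_mul two_ne_zero hm0, Nat.Prime.primeFactors Nat.prime_two,
          Nat.primeFactors_prod hprimes, Finset.insert_eq]
      have hIval : ∀ S ⊆ P, Complex.I ^ (2 * ∏ p ∈ S, p) = -1 := by
        intro S hSP
        rw [pow_mul, Complex.I_sq, (odd_prod (fun p hp => h4 p (hSP hp))).neg_one_pow]
      have hne : ∀ S ∈ (2 * ∏ p ∈ P, p).primeFactors.powerset,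
          Complex.I ^ (∏ p ∈ S, p) ≠ 1 := by
        intro S hS
        rw [hQ] at hS
        have hSsub := Finset.mem_powerset.mp hS
        by_cases h2S : 2 ∈ S
        · have herase : S.erase 2 ⊆ P := by
            intro p hp
            rcases Finset.mem_insert.mp (hSsub (Finset.mem_of_mem_erase hp)) with h | h
            · exact absurd h (Finset.ne_of_mem_erase hp)
            · exact h
          rw [← Finset.mul_prod_erase S _ h2S, hIval _ herase]
          intro h
          exact absurd h (by norm_num)
        · have hSP : S ⊆ P := fun p hp => by
            rcases Finset.mem_insert.mp (hSsub hp) with h | h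
            · exact absurd (h ▸ hp) h2S
            · exact h
          rw [Ipow_prod S (fun p hp => h4 p (hSP hp))]
          exact signI_ne_one _
      have hnn : Complex.I ^ (2 * ∏ p ∈ P, p) ≠ 1 := by
        rw [hIval P subset_rfl]
        intro h; exact absurd h (by norm_num)
      refine ⟨?_, hnn⟩
      rw [fekKey _ (by positivity) hne hnn, hQ]
      congr 1
      rw [Finset.sum_powerset_insert h2P]
      have hB : ∑ S ∈ P.powerset,
          ((-1:ℂ)) ^ (insert 2 S).card / (1 - Complex.I ^ (∏ p ∈ insert 2 S, p)) = 0 := by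
        have hterm : ∀ S ∈ P.powerset,
            ((-1:ℂ)) ^ (insert 2 S).card / (1 - Complex.I ^ (∏ p ∈ insert 2 S, p)) =
              -(((-1:ℂ)) ^ S.card) / 2 := by
          intro S hS
          have hSP := Finset.mem_powerset.mp hS
          have h2S : 2 ∉ S := fun h => h2P (hSP h)
          rw [Finset.card_insert_of_notMem h2S, Finset.prod_insert h2S, hIval S hSP,
            pow_succ]
          norm_num
        rw [Finset.sum_congr rfl hterm, ← Finset.sum_div, Finset.sum_neg_distrib]
        have hzero : ∑ S ∈ P.powerset, ((-1:ℂ)) ^ S.card = 0 := by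
          have h := Finset.sum_powerset_neg_one_pow_card_of_nonempty hPne
          calc ∑ S ∈ P.powerset, ((-1:ℂ)) ^ S.card
              = ((∑ S ∈ P.powerset, (-1:ℤ) ^ S.card : ℤ) : ℂ) := by push_cast; rfl
            _ = 0 := by rw [h]; exact Int.cast_zero
        rw [hzero]; norm_num
      rw [hB, add_zero, sumA P h4 hPne]
  obtain ⟨hmain, hnn⟩ := main
  have h1n : (1:ℂ) - Complex.I ^ n ≠ 0 := sub_ne_zero.mpr (fun h => hnn h.symm)
  have hval : ((Fek n).map (Int.castRingHom ℂ)).eval Complex.I / (1 - Complex.I ^ n) =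
      2 ^ (P.card - 1) * Complex.I := by
    rw [hmain, mul_comm, mul_div_assoc, div_self h1n, mul_one]
  have hne0 : ((Fek n).map (Int.castRingHom ℂ)).eval Complex.I ≠ 0 := by
    rw [hmain]
    exact mul_ne_zero h1n (mul_ne_zero (pow_ne_zero _ two_ne_zero) Complex.I_ne_zero)
  refine ⟨hval, hne0, ?_⟩
  rintro ⟨g, hg⟩
  apply hne0
  have hcyc : (cyclotomic 4 ℤ).map (Int.castRingHom ℂ) = cyclotomic 4 ℂ :=
    map_cyclotomic _ _
  have h4eq : (4:ℕ) = 2 ^ (1 + 1) := rfl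
  have hcyc4 : cyclotomic 4 ℂ = ∑ i ∈ Finset.range 2, (X ^ 2 ^ 1) ^ i := by
    rw [h4eq, cyclotomic_prime_pow_eq_geom_sum Nat.prime_two]
  have heval : (cyclotomic 4 ℂ).eval Complex.I = 0 := by
    rw [hcyc4]
    simp [Finset.sum_range_succ, Complex.I_sq]
  rw [hg, Polynomial.map_mul, Polynomial.eval_mul, hcyc, heval, zero_mul]
end

section
/- Let q be an odd prime and define u_q(x) = s_q'(x)·F_q(x) − F_q'(x)·s_q(x) where s_q(x) = x^q − 1 and F_q(x) = x + x² + ⋯ + x^{q−1}. Then u_q(x) = Φ_q(x)² − q·x^{q−1}, where Φ_q(x) = 1 + x + ⋯ + x^{q−1}, and over 𝔽_q one has u_q(x) ≡ (x−1)^{2q−2} (mod q). -/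
open Polynomial

theorem stmt11 (q : ℕ) (hq : q.Prime) (hodd : Odd q)
    (sq tq uq : Polynomial ℤ)
    (hsq : sq = X ^ q - 1)
    (htq : tq = ∑ a ∈ Finset.Icc 1 (q - 1), X ^ a)
    (huq : uq = derivative sq * tq - derivative tq * sq) :
    uq = (∑ i ∈ Finset.range q, X ^ i) ^ 2 - C (q : ℤ) * X ^ (q - 1) ∧
    uq.map (Int.castRingHom (ZMod q)) = (X - 1) ^ (2 * q - 2) := by
  haveI : Fact q.Prime := ⟨hq⟩
  set Φ : Polynomial ℤ := ∑ i ∈ Finset.range q, X ^ i with hΦ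
  have hq1 : 1 ≤ q := hq.pos
  have hrange : Finset.range q = insert 0 (Finset.Icc 1 (q - 1)) := by
    ext x; simp [Finset.mem_range, Finset.mem_Icc]; omega
  have htq' : tq = Φ - 1 := by
    rw [htq, hΦ, hrange, Finset.sum_insert (by simp)]
    simp
  have hsq' : sq = Φ * (X - 1) := by
    rw [hsq, hΦ, geom_sum_mul]
  have hder : derivative sq = C (q : ℤ) * X ^ (q - 1) := by
    rw [hsq]; simp [derivative_X_pow]
  have key : derivative Φ * (X - 1) = C (q : ℤ) * X ^ (q - 1) - Φ := by
    have := hder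
    rw [hsq'] at this
    rw [derivative_mul] at this
    simp only [derivative_sub, derivative_X, derivative_one, sub_zero, mul_one] at this
    linear_combination this
  have h1 : uq = Φ ^ 2 - C (q : ℤ) * X ^ (q - 1) := by
    rw [huq, hder, htq', hsq']
    have hdt : derivative tq = derivative Φ := by
      rw [htq']; simp
    rw [htq'] at hdt
    simp only [derivative_sub, derivative_one, sub_zero]
    linear_combination (-Φ) * key
  refine ⟨h1, ?_⟩
  -- second part
  have hmapΦ : Φ.map (Int.castRingHom (ZMod q)) = (X - 1) ^ (q - 1) := by
    have hX1 : (X - 1 : (ZMod q)[X]) ≠ 0 := by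
      have := Polynomial.X_sub_C_ne_zero (1 : ZMod q)
      simpa using this
    apply mul_left_cancel₀ hX1
    have hL : (X - 1 : (ZMod q)[X]) * Φ.map (Int.castRingHom (ZMod q)) = X ^ q - 1 := by
      have : ((Φ * (X - 1)).map (Int.castRingHom (ZMod q))) = X ^ q - 1 := by
        rw [← hsq', hsq]
        simp
      rw [Polynomial.map_mul] at this
      rw [mul_comm]
      simpa using this
    have hR : (X - 1 : (ZMod q)[X]) * (X - 1) ^ (q - 1) = X ^ q - 1 := by
      rw [← pow_succ']
      have : q - 1 + 1 = q := by omega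
      rw [this]
      have := sub_pow_char (X : (ZMod q)[X]) 1 (p := q)
      simpa using this
    rw [hL, hR]
  rw [h1]
  rw [Polynomial.map_sub, Polynomial.map_pow, hmapΦ, Polynomial.map_mul, Polynomial.map_pow]
  simp only [map_C, Int.cast_natCast, eq_intCast, Int.cast_natCast]
  have : ((q : ZMod q)) = 0 := ZMod.natCast_self q
  rw [← pow_mul]
  have h2 : (q - 1) * 2 = 2 * q - 2 := by omega
  simp [this, h2]
end

section
/- Let q be an odd prime and u_q(x) = Φ_q(x)² − q·x^{q−1} ∈ ℤ[x], where Φ_q(x) = 1 + x + ⋯ + x^{q−1}. Then u_q(x+1) is Eisenstein at the prime q, and hence u_q is irreducible over ℚ. -/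
open Polynomial

theorem stmt12 (q : ℕ) (hq : q.Prime) (hodd : Odd q)
    (uq : Polynomial ℤ)
    (huq : uq = (∑ i ∈ Finset.range q, X ^ i) ^ 2 - C (q : ℤ) * X ^ (q - 1)) :
    (uq.comp (X + 1)).IsEisensteinAt (Ideal.span {(q : ℤ)}) ∧
    Irreducible (uq.map (Int.castRingHom ℚ)) := by
  haveI : Fact q.Prime := ⟨hq⟩
  have hq2 : 2 ≤ q := hq.two_le
  have hq3 : 3 ≤ q := by
    rcases eq_or_lt_of_le hq2 with h | h
    · exact absurd hodd (h ▸ by decide)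
    · exact h
  set G : ℤ[X] := ∑ i ∈ Finset.range q, X ^ i with hG
  have hGcyc : G = cyclotomic q ℤ := (cyclotomic_prime ℤ q).symm
  have hGmon : G.Monic := monic_geom_sum_X (by omega)
  have hGdeg : G.natDegree = q - 1 := by
    rw [hGcyc, natDegree_cyclotomic, Nat.totient_prime hq]
  have hdeg : uq.natDegree = 2 * (q - 1) := by
    rw [huq]
    rw [natDegree_sub_eq_left_of_natDegree_lt]
    · rw [natDegree_pow, hGdeg]
    · rw [natDegree_pow, hGdeg]
      calc (C (q:ℤ) * X ^ (q-1)).natDegree ≤ q - 1 := by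
            apply (natDegree_C_mul_le _ _).trans
            simp
        _ < 2 * (q - 1) := by omega
  have hmon : uq.Monic := by
    rw [huq]
    apply (hGmon.pow 2).sub_of_left
    apply lt_of_le_of_lt (degree_mul_le _ _)
    rw [degree_eq_natDegree (hGmon.pow 2).ne_zero, natDegree_pow, hGdeg]
    calc (C (q:ℤ)).degree + (X ^ (q-1) : ℤ[X]).degree ≤ 0 + (q - 1 : ℕ) :=
          add_le_add degree_C_le (degree_X_pow_le _)
      _ = ((q - 1 : ℕ) : WithBot ℕ) := by rw [zero_add]
      _ < ((2 * (q - 1) : ℕ) : WithBot ℕ) := by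
          exact_mod_cast (by omega : q - 1 < 2 * (q - 1))
  set v : ℤ[X] := uq.comp (X + 1) with hv
  have hvmon : v.Monic := hmon.comp_X_add_C 1
  have hvdeg : v.natDegree = 2 * (q - 1) := by
    rw [hv, natDegree_comp, ← C_1, natDegree_X_add_C, mul_one, hdeg]
  -- mod q computation
  have hmap : v.map (Int.castRingHom (ZMod q)) = X ^ (2 * (q - 1)) := by
    have hGmap : G.map (Int.castRingHom (ZMod q)) = ∑ i ∈ Finset.range q, X ^ i := by
      simp [hG, Polynomial.map_sum]
    have hcomp : (∑ i ∈ Finset.range q, (X : (ZMod q)[X]) ^ i).comp (X + 1)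
        = X ^ (q - 1) := by
      have h2 : (∑ i ∈ Finset.range q, (X + 1 : (ZMod q)[X]) ^ i) * X = X ^ q := by
        have h3 := geom_sum_mul (X + 1 : (ZMod q)[X]) q
        rw [add_sub_cancel_right] at h3
        rw [h3, add_pow_char, one_pow, add_sub_cancel_right]
      have h1 : (∑ i ∈ Finset.range q, (X : (ZMod q)[X]) ^ i).comp (X + 1) * X
          = X ^ (q - 1) * X := by
        calc (∑ i ∈ Finset.range q, (X : (ZMod q)[X]) ^ i).comp (X + 1) * X
            = (∑ i ∈ Finset.range q, (X + 1 : (ZMod q)[X]) ^ i) * X := by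
              simp [eval₂_finset_sum]
          _ = X ^ q := h2
          _ = X ^ (q - 1) * X := by rw [← pow_succ]; congr 1; omega
      exact mul_right_cancel₀ X_ne_zero h1
    rw [hv, huq]
    simp only [Polynomial.map_comp, Polynomial.map_sub, Polynomial.map_pow,
      Polynomial.map_mul, Polynomial.map_add, Polynomial.map_one, map_X, map_C]
    rw [hGmap]
    rw [show ((Int.castRingHom (ZMod q)) (q : ℤ)) = 0 by simp, C_0, zero_mul, sub_zero,
      pow_comp, hcomp, ← pow_mul, Nat.mul_comm]
  have hcoeffmem : ∀ {n : ℕ}, n < v.natDegree → v.coeff n ∈ Ideal.span {(q : ℤ)} := by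
    intro n hn
    rw [Ideal.mem_span_singleton]
    have h0 : (v.map (Int.castRingHom (ZMod q))).coeff n = 0 := by
      rw [hmap, coeff_X_pow, if_neg]
      omega
    rw [coeff_map] at h0
    exact_mod_cast (ZMod.intCast_zmod_eq_zero_iff_dvd _ _).mp h0
  have hconst : v.coeff 0 = (q : ℤ) ^ 2 - q := by
    rw [hv, coeff_zero_eq_eval_zero, eval_comp, huq]
    simp [hG, eval_finset_sum]
  have hEis : v.IsEisensteinAt (Ideal.span {(q : ℤ)}) := by
    refine ⟨?_, hcoeffmem, ?_⟩
    · rw [hvmon.leadingCoeff, Ideal.mem_span_singleton]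
      intro h
      have h1 : (q:ℤ) ≤ 1 := Int.le_of_dvd one_pos h
      have h2 : (2:ℤ) ≤ q := by exact_mod_cast hq2
      omega
    · rw [hconst, Ideal.span_singleton_pow, Ideal.mem_span_singleton]
      intro h
      have h2 : (q:ℤ)^2 ∣ (q:ℤ) := by
        have := dvd_sub (dvd_refl ((q:ℤ)^2)) h
        simpa using this
      have h3 := Int.le_of_dvd (by exact_mod_cast hq.pos) h2
      have h4 : (2:ℤ) ≤ q := by exact_mod_cast hq2
      nlinarith
  refine ⟨hEis, ?_⟩
  have hvirr : Irreducible v := by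
    apply hEis.irreducible
    · rw [Ideal.span_singleton_prime (by exact_mod_cast hq.pos.ne')]
      exact Nat.prime_iff_prime_int.mp hq
    · exact hvmon.isPrimitive
    · omega
  have huirr : Irreducible uq := by
    have he : (algEquivAevalXAddC (1 : ℤ)) uq = v := by
      rw [hv, algEquivAevalXAddC_apply, ← comp_eq_aeval, map_one]
    rw [← MulEquiv.irreducible_iff (algEquivAevalXAddC (1:ℤ)).toMulEquiv, ]
    show Irreducible ((algEquivAevalXAddC (1:ℤ)) uq)
    rw [he]; exact hvirr
  exact (IsPrimitive.Int.irreducible_iff_irreducible_map_cast hmon.isPrimitive).mp huirr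
end

section
/- Let q be an odd prime. For no positive integer d and no primitive d-th root of unity ζ_d does u_q(ζ_d) = 0, where u_q(x) = Φ_q(x)² − q·x^{q−1} with Φ_q(x) = 1 + x + ⋯ + x^{q−1}. Equivalently, no cyclotomic polynomial Φ_d divides u_q. -/
/-!
Reducing modulo `q`, `Φ_q ≡ (X - 1)^(q-1)`, so `u_q ≡ (X - 1)^(2(q-1))`. Hence if `Φ_d ∣ u_q`
with `d > 1`, then `Φ_d(1) ≡ 0 (mod q)`, which forces `d = q^k` with `k ≥ 1`. For `d = q` we
get `u_q(ζ_q) = -q ζ_q^(q-1) ≠ 0`, for `k ≥ 2` the degree `q^(k-1)(q-1)` of `Φ_d` exceeds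
`deg u_q = 2(q-1)` because `q ≥ 3`, and `d = 1` is excluded by `u_q(1) = q² - q ≠ 0`.
Divisibility by `Φ_d` is equivalent to vanishing at `ζ_d` since `Φ_d` is its minimal polynomial.
-/

open Polynomial

noncomputable def uPoly (q : ℕ) : ℤ[X] :=
  (∑ i ∈ Finset.range q, X ^ i) ^ 2 - C (q : ℤ) * X ^ (q - 1)

theorem uPoly_eq {q : ℕ} (hq : q.Prime) :
    uPoly q = cyclotomic q ℤ ^ 2 - C (q : ℤ) * X ^ (q - 1) := by
  have := Fact.mk hq
  rw [uPoly, cyclotomic_prime]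

theorem eval_one_uPoly (q : ℕ) : eval 1 (uPoly q) = (q : ℤ) ^ 2 - q := by
  simp [uPoly]

theorem eval_one_uPoly_ne_zero {q : ℕ} (hq : 2 ≤ q) : eval 1 (uPoly q) ≠ 0 := by
  rw [eval_one_uPoly]
  have : (2 : ℤ) ≤ q := by exact_mod_cast hq
  nlinarith

theorem uPoly_ne_zero {q : ℕ} (hq : 2 ≤ q) : uPoly q ≠ 0 :=
  fun h => eval_one_uPoly_ne_zero hq (by rw [h, eval_zero])

theorem natDegree_uPoly_le {q : ℕ} (hq : q.Prime) : (uPoly q).natDegree ≤ 2 * (q - 1) := by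
  rw [uPoly_eq hq]
  refine (natDegree_sub_le _ _).trans (max_le ?_ ?_)
  · rw [natDegree_pow, natDegree_cyclotomic, Nat.totient_prime hq, mul_comm]
  · exact natDegree_C_mul_X_pow_le _ _ |>.trans (by omega)

theorem cyclotomic_prime_zmod {q : ℕ} [Fact q.Prime] :
    cyclotomic q (ZMod q) = (X - 1) ^ (q - 1) := by
  simpa using cyclotomic_mul_prime_pow_eq (ZMod q) (m := 1) (Nat.Prime.not_dvd_one Fact.out)
    one_pos

theorem map_uPoly_zmod {q : ℕ} [Fact q.Prime] :
    (uPoly q).map (Int.castRingHom (ZMod q)) = (X - 1) ^ (2 * (q - 1)) := by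
  simp [uPoly_eq Fact.out, cyclotomic_prime_zmod, ← pow_mul, mul_comm]

theorem isRoot_of_dvd_X_sub_C_pow {K : Type*} [Field K] {p : K[X]} {a : K} {n : ℕ}
    (hp : 0 < p.natDegree) (h : p ∣ (X - C a) ^ n) : p.IsRoot a := by
  obtain ⟨i, -, hi⟩ := (dvd_prime_pow (prime_X_sub_C a) n).mp h
  obtain ⟨u, rfl⟩ := hi.symm
  rcases i with _ | i
  · simp [natDegree_eq_zero_of_isUnit u.isUnit] at hp
  · simp [IsRoot]

theorem exists_eq_prime_pow_of_eval_one_cyclotomic_eq_zero {p d : ℕ} [hp : Fact p.Prime]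
    (hd : 1 < d) (h : eval 1 (cyclotomic d (ZMod p)) = 0) : ∃ k, d = p ^ (k + 1) := by
  by_cases hpp : IsPrimePow d
  · obtain ⟨r, k, hr, hk, rfl⟩ := hpp
    have := Fact.mk hr.nat_prime
    obtain ⟨k, rfl⟩ : ∃ j, k = j + 1 := ⟨k - 1, by omega⟩
    rw [eval_one_cyclotomic_prime_pow, ZMod.natCast_eq_zero_iff,
      Nat.prime_dvd_prime_iff_eq hp.out hr.nat_prime] at h
    exact ⟨k, h ▸ rfl⟩
  · refine absurd h ?_
    rw [eval_one_cyclotomic_not_prime_pow]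
    · exact one_ne_zero
    · rintro r hr (_ | k) rfl
      · simp at hd
      · exact hpp ⟨r, k + 1, hr.prime, k.succ_pos, rfl⟩

theorem cyclotomic_dvd_iff_eval_map_eq_zero {K : Type*} [Field K] [CharZero K] {d : ℕ}
    (hd : 0 < d) {ζ : K} (hζ : IsPrimitiveRoot ζ d) (p : ℤ[X]) :
    cyclotomic d ℤ ∣ p ↔ (p.map (Int.castRingHom K)).eval ζ = 0 := by
  rw [cyclotomic_eq_minpoly hζ hd, ← minpoly.isIntegrallyClosed_dvd_iff (hζ.isIntegral hd),
    aeval_def, eval₂_eq_eval_map, algebraMap_int_eq]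

theorem not_cyclotomic_prime_dvd_uPoly {q : ℕ} (hq : q.Prime) : ¬ cyclotomic q ℤ ∣ uPoly q := by
  have hζ := Complex.isPrimitiveRoot_exp q hq.ne_zero
  rw [cyclotomic_dvd_iff_eval_map_eq_zero hq.pos hζ, uPoly_eq hq]
  simp [(hζ.isRoot_cyclotomic hq.pos).eq_zero, hq.ne_zero, hζ.ne_zero hq.ne_zero]

theorem not_cyclotomic_one_dvd_uPoly {q : ℕ} (hq : 2 ≤ q) : ¬ cyclotomic 1 ℤ ∣ uPoly q := by
  rw [cyclotomic_one, ← C_1, dvd_iff_isRoot]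
  exact eval_one_uPoly_ne_zero hq

theorem not_cyclotomic_prime_pow_dvd_uPoly {q : ℕ} (hq : q.Prime) (hodd : Odd q) {k : ℕ}
    (hk : 0 < k) : ¬ cyclotomic (q ^ (k + 1)) ℤ ∣ uPoly q := by
  intro h
  have hdeg := (natDegree_le_of_dvd h (uPoly_ne_zero hq.two_le)).trans (natDegree_uPoly_le hq)
  rw [natDegree_cyclotomic, Nat.totient_prime_pow_succ hq] at hdeg
  have hq3 : 3 ≤ q := by have := hq.two_le; rcases hodd with ⟨m, rfl⟩; omega
  have := Nat.le_of_mul_le_mul_right hdeg (by omega : 0 < q - 1)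
  have := Nat.le_self_pow hk.ne' q
  omega

theorem not_cyclotomic_dvd_uPoly {q : ℕ} (hq : q.Prime) (hodd : Odd q) {d : ℕ} (hd : 0 < d) :
    ¬ cyclotomic d ℤ ∣ uPoly q := by
  have := Fact.mk hq
  intro h
  obtain rfl | hd1 : d = 1 ∨ 1 < d := by omega
  · exact not_cyclotomic_one_dvd_uPoly hq.two_le h
  have hroot : eval 1 (cyclotomic d (ZMod q)) = 0 := by
    refine isRoot_of_dvd_X_sub_C_pow (a := 1) (n := 2 * (q - 1)) ?_ ?_
    · rw [natDegree_cyclotomic]; exact Nat.totient_pos.mpr hd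
    · simpa [← map_uPoly_zmod] using Polynomial.map_dvd (Int.castRingHom (ZMod q)) h
  obtain ⟨_ | k, rfl⟩ := exists_eq_prime_pow_of_eval_one_cyclotomic_eq_zero hd1 hroot
  · exact not_cyclotomic_prime_dvd_uPoly hq (by simpa using h)
  · exact not_cyclotomic_prime_pow_dvd_uPoly hq hodd k.succ_pos h

theorem stmt13 (q : ℕ) (hq : q.Prime) (hodd : Odd q)
    (uq : Polynomial ℤ)
    (huq : uq = (∑ i ∈ Finset.range q, X ^ i) ^ 2 - C (q : ℤ) * X ^ (q - 1)) :
    (∀ d : ℕ, 0 < d → ∀ ζ : ℂ, IsPrimitiveRoot ζ d →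
      (uq.map (Int.castRingHom ℂ)).eval ζ ≠ 0) ∧
    (∀ d : ℕ, 0 < d → ¬ cyclotomic d ℤ ∣ uq) := by
  rw [huq, ← uPoly]
  exact ⟨fun d hd ζ hζ => (cyclotomic_dvd_iff_eval_map_eq_zero hd hζ _).not.mp
    (not_cyclotomic_dvd_uPoly hq hodd hd), fun d hd => not_cyclotomic_dvd_uPoly hq hodd hd⟩
end

section
/- Let p > q be odd primes and n = pq. Working over the algebraic closure of 𝔽_p, one has F_n(x) ≡ (x^q − 1)^{p−1}·F_q(x) − F_q(x)^p (mod p) and F_n'(x) ≡ −(x^q − 1)^{p−2}·u_q(x) (mod p), where u_q(x) = Φ_q(x)² − q·x^{q−1}. Moreover, for any root x₀ ∈ 𝔽̄_p of F_n, the multiplicity of x₀ as a root of F_n equals 1 plus the multiplicity of x₀ as a root of u_q. -/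
/-!
Splitting the `a < pq` prime to `q` according to whether `p ∣ a` gives, over `ℤ`,
`F_{pq} = Φ_p(X^q) F_q - F_q(X^p)`; in characteristic `p` one has `Φ_p(Y) = (Y - 1)^(p-1)` and
`F_q(X^p) = F_q^p`. Differentiating, with `Φ_q (X - 1) = X^q - 1`, gives
`F_{pq}' = -(X^q - 1)^(p-2) u_q`.

A root `x₀` of `F_{pq}` is not a `q`-th root of unity, so its multiplicity in `F_{pq}'` is its
multiplicity in `u_q`, which is `< p`: otherwise `X^p - x₀^p = (X - x₀)^p` divides `u_q`, whose
coefficient of `X^(q-2)` is `q - 1 ≠ 0`, forcing `deg u_q ≥ p + q - 2 > 2q - 2`. Finally, a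
root of multiplicity `m` has multiplicity `m - 1` in the derivative when `p ∤ m`, and at least
`m ≥ p` when `p ∣ m`.
-/

open Polynomial

open Finset

theorem derivative_geom_sum_mul_X_sub_one_add {R : Type*} [CommRing R] (q : ℕ) :
    derivative (∑ i ∈ range q, (X : R[X]) ^ i) * (X - 1) + ∑ i ∈ range q, (X : R[X]) ^ i =
      C (q : R) * X ^ (q - 1) := by
  have h := congrArg derivative (geom_sum_mul (X : R[X]) q)
  rwa [derivative_mul, derivative_sub, derivative_sub, derivative_X, derivative_one, sub_zero,
    mul_one, derivative_X_pow, sub_zero] at h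

theorem coeff_geom_sum_sq {R : Type*} [Semiring R] {q k : ℕ} (hk : k < q) :
    ((∑ i ∈ range q, (X : R[X]) ^ i) ^ 2).coeff k = (k + 1 : ℕ) := by
  have hcoeff : ∀ j ≤ k, (∑ i ∈ range q, (X : R[X]) ^ i).coeff j = 1 := fun j hj => by
    simp only [finsetSum_coeff, coeff_X_pow, sum_ite_eq, mem_range, ite_eq_left_iff, not_lt]
    omega
  have hterm : ∀ x ∈ antidiagonal k, (∑ i ∈ range q, (X : R[X]) ^ i).coeff x.1 *
      (∑ i ∈ range q, (X : R[X]) ^ i).coeff x.2 = 1 := fun x hx => by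
    rw [HasAntidiagonal.mem_antidiagonal] at hx
    rw [hcoeff x.1 (by omega), hcoeff x.2 (by omega), mul_one]
  rw [sq, coeff_mul, sum_congr rfl hterm, sum_const, Nat.card_antidiagonal, nsmul_one]

theorem coeff_geom_sum_sq_sub {R : Type*} [CommRing R] {q : ℕ} (hq : 2 ≤ q) :
    ((∑ i ∈ range q, (X : R[X]) ^ i) ^ 2 - C (q : R) * X ^ (q - 1)).coeff (q - 2) =
      ((q - 1 : ℕ) : R) := by
  rw [coeff_sub, coeff_geom_sum_sq (by omega), coeff_C_mul_X_pow, if_neg (by omega), sub_zero,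
    show q - 2 + 1 = q - 1 by omega]

theorem natDegree_geom_sum_le {R : Type*} [Semiring R] (q : ℕ) :
    (∑ i ∈ range q, (X : R[X]) ^ i).natDegree ≤ q - 1 :=
  natDegree_sum_le_of_forall_le _ _ fun i hi =>
    (natDegree_X_pow_le i).trans (by simp only [mem_range] at hi; omega)

theorem geom_sum_ne_one_of_pow_eq_one {K : Type*} [CommRing K] [IsDomain K] {q : ℕ} {c : K}
    (hq : (q : K) ≠ 1) (hc : c ^ q = 1) : ∑ i ∈ range q, c ^ i ≠ 1 := by
  rcases eq_or_ne c 1 with rfl | hc1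
  · simpa using hq
  · have h := geom_sum_mul c q
    rw [hc, sub_self, mul_eq_zero, sub_eq_zero] at h
    rw [h.resolve_right hc1]
    exact zero_ne_one

theorem pow_dvd_derivative_of_pow_dvd_of_natCast_eq_zero {R : Type*} [CommRing R] {f : R[X]}
    {c : R} {m : ℕ} (h : (X - C c) ^ m ∣ f) (hm : (m : R) = 0) :
    (X - C c) ^ m ∣ derivative f := by
  obtain ⟨g, rfl⟩ := h
  rw [derivative_mul, derivative_X_sub_C_pow, hm, C_0, zero_mul, zero_mul, zero_add]
  exact dvd_mul_right _ _

theorem natCast_ne_zero_of_pos_of_lt_char {R : Type*} [AddMonoidWithOne R] {p : ℕ} [CharP R p]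
    {n : ℕ} (hn : 0 < n) (hnp : n < p) : (n : R) ≠ 0 := by
  rw [Ne, CharP.cast_eq_zero_iff R p]
  exact fun h => absurd (Nat.le_of_dvd hn h) (by omega)

section CharP

variable {K : Type*} [CommRing K] {p : ℕ} [CharP K p]

theorem rootMultiplicity_eq_derivative_add_one [IsDomain K] {f : K[X]} {c : K}
    (hf : f.IsRoot c) (hf' : derivative f ≠ 0)
    (hlt : (derivative f).rootMultiplicity c < p) :
    f.rootMultiplicity c = (derivative f).rootMultiplicity c + 1 := by
  have hm : 0 < f.rootMultiplicity c :=
    (rootMultiplicity_pos fun h => hf' (by rw [h, derivative_zero])).mpr hf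
  by_cases hmK : (f.rootMultiplicity c : K) = 0
  · have hpm : p ≤ f.rootMultiplicity c :=
      Nat.le_of_dvd hm ((CharP.cast_eq_zero_iff K p _).mp hmK)
    have := (le_rootMultiplicity_iff hf').mpr
      (pow_dvd_derivative_of_pow_dvd_of_natCast_eq_zero (pow_rootMultiplicity_dvd f c) hmK)
    omega
  · rw [derivative_rootMultiplicity_of_root_of_mem_nonZeroDivisors hf
      (mem_nonZeroDivisors_of_ne_zero hmK)]
    omega

theorem rootMultiplicity_eq_add_one_of_derivative_eq_mul [IsDomain K] {f a g : K[X]} {c : K}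
    (hf : f.IsRoot c) (hderiv : derivative f = a * g) (ha : ¬a.IsRoot c) (hg : g ≠ 0)
    (hlt : g.rootMultiplicity c < p) :
    f.rootMultiplicity c = g.rootMultiplicity c + 1 := by
  have ha0 : a ≠ 0 := by rintro rfl; exact ha (by simp)
  have hmul : (derivative f).rootMultiplicity c = g.rootMultiplicity c := by
    rw [hderiv, rootMultiplicity_mul (mul_ne_zero ha0 hg), rootMultiplicity_eq_zero ha, zero_add]
  rw [rootMultiplicity_eq_derivative_add_one hf (hderiv ▸ mul_ne_zero ha0 hg) (hmul ▸ hlt),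
    hmul]

theorem coeff_geom_sum_sq_sub_ne_zero {q : ℕ} (hq : 2 ≤ q) (hqp : q < p) :
    ((∑ i ∈ range q, (X : K[X]) ^ i) ^ 2 - C (q : K) * X ^ (q - 1)).coeff (q - 2) ≠ 0 := by
  rw [coeff_geom_sum_sq_sub hq]
  exact natCast_ne_zero_of_pos_of_lt_char (by omega) (by omega)

variable [Fact p.Prime]

theorem geom_sum_eq_sub_one_pow_char (y : K) : ∑ i ∈ range p, y ^ i = (y - 1) ^ (p - 1) := by
  have h := cyclotomic_mul_prime_eq_pow_of_not_dvd K (Fact.out : p.Prime).not_dvd_one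
  rw [one_mul, cyclotomic_prime, cyclotomic_one] at h
  simpa using congrArg (eval y) h

theorem map_expand_eq_pow_char (f : ℤ[X]) :
    (expand ℤ p f).map (Int.castRingHom K) = f.map (Int.castRingHom K) ^ p := by
  rw [← map_frobenius_expand, ← map_expand, Polynomial.map_map,
    RingHom.ext_int ((frobenius K p).comp _) (Int.castRingHom K)]

theorem add_le_natDegree_of_X_sub_C_pow_char_dvd {f : K[X]} {c : K} {k : ℕ}
    (hdvd : (X - C c) ^ p ∣ f) (hk : k < p) (hfk : f.coeff k ≠ 0) : p + k ≤ f.natDegree := by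
  obtain ⟨w, rfl⟩ := hdvd
  rw [sub_pow_char, ← C_pow] at hfk ⊢
  have hwk : w.coeff k ≠ 0 := by
    rw [sub_mul, coeff_sub, coeff_X_pow_mul', if_neg (by omega), coeff_C_mul, zero_sub,
      neg_ne_zero] at hfk
    exact right_ne_zero_of_mul hfk
  have hw0 : w ≠ 0 := by rintro rfl; simp at hwk
  have : Nontrivial K := CharP.nontrivial_of_char_ne_one (Fact.out : p.Prime).ne_one
  rw [(monic_X_pow_sub_C _ (Fact.out : p.Prime).ne_zero).natDegree_mul' hw0,
    natDegree_X_pow_sub_C]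
  exact Nat.add_le_add_left (le_natDegree_of_ne_zero hwk) p

theorem rootMultiplicity_geom_sum_sq_sub_lt {q : ℕ} (hq : 2 ≤ q) (hqp : q < p) (c : K) :
    ((∑ i ∈ range q, (X : K[X]) ^ i) ^ 2 - C (q : K) * X ^ (q - 1)).rootMultiplicity c < p := by
  set u := (∑ i ∈ range q, (X : K[X]) ^ i) ^ 2 - C (q : K) * X ^ (q - 1)
  have hcoeff : u.coeff (q - 2) ≠ 0 := coeff_geom_sum_sq_sub_ne_zero hq hqp
  have hdeg : u.natDegree ≤ 2 * (q - 1) := by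
    refine (natDegree_sub_le _ _).trans (max_le ?_ ?_)
    · exact natDegree_pow_le.trans (Nat.mul_le_mul_left 2 (natDegree_geom_sum_le q))
    · exact (natDegree_C_mul_X_pow_le _ _).trans (by omega)
  by_contra! h
  have := add_le_natDegree_of_X_sub_C_pow_char_dvd
    ((le_rootMultiplicity_iff (fun h0 => by simp [h0] at hcoeff)).mp h) (by omega) hcoeff
  omega

end CharP

theorem fek_of_prime {q : ℕ} (hq : q.Prime) : Fek q = ∑ i ∈ range q, X ^ i - 1 := by
  obtain ⟨q, rfl⟩ : ∃ q', q = q' + 1 := ⟨q - 1, (Nat.sub_add_cancel hq.one_lt.le).symm⟩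
  simp only [Fek, sum_range_succ', Nat.gcd_zero_left, if_neg hq.ne_one, add_zero,
    pow_zero, add_sub_cancel_right]
  refine Finset.sum_congr rfl fun i hi => if_pos ?_
  exact (Nat.coprime_of_lt_prime i.succ_ne_zero (by simpa using hi) hq).symm

theorem sum_range_mul_coprime (m q : ℕ) :
    (∑ a ∈ range (m * q), if a.gcd q = 1 then (X : ℤ[X]) ^ a else 0) =
      (∑ j ∈ range m, (X ^ q) ^ j) * Fek q := by
  induction m with
  | zero => simp
  | succ m ih =>
    rw [add_mul, one_mul, Finset.sum_range_add, ih, sum_range_succ, add_mul, add_right_inj, Fek,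
      mul_sum]
    refine Finset.sum_congr rfl fun b _ => ?_
    simp only [Nat.gcd_mul_right_add_left, mul_ite, mul_zero, pow_add, pow_mul']

theorem sum_range_mul_dvd_coprime {p q : ℕ} (hp : 0 < p) (hpq : p.Coprime q) :
    (∑ a ∈ range (p * q) with p ∣ a, if a.gcd q = 1 then (X : ℤ[X]) ^ a else 0) =
      expand ℤ p (Fek q) := by
  have hmul : (range (p * q)).filter (p ∣ ·) =
      (range q).map ⟨(p * ·), mul_right_injective₀ hp.ne'⟩ := by
    ext a
    simp only [mem_map, mem_range, mem_filter, Function.Embedding.coeFn_mk]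
    constructor
    · rintro ⟨ha, b, rfl⟩
      exact ⟨b, (Nat.mul_lt_mul_left hp).mp ha, rfl⟩
    · rintro ⟨b, hb, rfl⟩
      exact ⟨(Nat.mul_lt_mul_left hp).mpr hb, dvd_mul_right p b⟩
  rw [hmul, sum_map, Fek, map_sum]
  simp only [Function.Embedding.coeFn_mk]
  refine Finset.sum_congr rfl fun b _ => ?_
  simp only [Nat.Coprime.gcd_mul_left_cancel b hpq]
  rw [apply_ite (expand ℤ p), map_pow, expand_X, pow_mul, map_zero]

theorem fek_prime_mul {p q : ℕ} (hp : p.Prime) (hpq : p.Coprime q) :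
    Fek (p * q) = (∑ j ∈ range p, (X ^ q) ^ j) * Fek q - expand ℤ p (Fek q) := by
  rw [← sum_range_mul_coprime, ← sum_range_mul_dvd_coprime hp.pos hpq, eq_sub_iff_add_eq,
    ← sum_filter_not_add_sum_filter (range (p * q)) (p ∣ ·), add_left_inj, Fek,
    sum_filter]
  refine Finset.sum_congr rfl fun a _ => ?_
  have hcop : a.gcd (p * q) = 1 ↔ ¬p ∣ a ∧ a.gcd q = 1 := by
    rw [← Nat.Coprime, Nat.coprime_mul_iff_right, Nat.coprime_comm, hp.coprime_iff_not_dvd]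
  simp only [hcop, ite_and]

theorem pow_ne_one_of_isRoot_fekete {K : Type*} [CommRing K] [IsDomain K] {p q : ℕ}
    (hp : 2 ≤ p) (hq : (q : K) ≠ 1) {c : K}
    (hc : ((X ^ q - 1) ^ (p - 1) * (∑ i ∈ range q, (X : K[X]) ^ i - 1) -
        (∑ i ∈ range q, (X : K[X]) ^ i - 1) ^ p).IsRoot c) :
    c ^ q ≠ 1 := by
  intro hcq
  refine geom_sum_ne_one_of_pow_eq_one hq hcq ?_
  simp only [IsRoot, eval_sub, eval_mul, eval_pow, eval_X, eval_one, hcq, sub_self,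
    zero_pow (show p - 1 ≠ 0 by omega), zero_mul, zero_sub, neg_eq_zero, eval_finsetSum] at hc
  exact sub_eq_zero.mp (pow_eq_zero_iff (show p ≠ 0 by omega) |>.mp hc)

section Fekete

variable {K : Type*} [CommRing K] {p : ℕ} [Fact p.Prime] [CharP K p]

theorem map_fek_prime_mul {q : ℕ} (hpq : p.Coprime q) :
    (Fek (p * q)).map (Int.castRingHom K) =
      (X ^ q - 1) ^ (p - 1) * (Fek q).map (Int.castRingHom K) -
        (Fek q).map (Int.castRingHom K) ^ p := by
  rw [fek_prime_mul Fact.out hpq, Polynomial.map_sub, Polynomial.map_mul, map_expand_eq_pow_char,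
    ← geom_sum_eq_sub_one_pow_char]
  simp [Polynomial.map_sum]

theorem derivative_fekete_char (q : ℕ) :
    derivative ((X ^ q - 1) ^ (p - 1) * (∑ i ∈ range q, (X : K[X]) ^ i - 1) -
        (∑ i ∈ range q, (X : K[X]) ^ i - 1) ^ p) =
      -((X ^ q - 1) ^ (p - 2) *
        ((∑ i ∈ range q, (X : K[X]) ^ i) ^ 2 - C (q : K) * X ^ (q - 1))) := by
  set Φ := ∑ i ∈ range q, (X : K[X]) ^ i
  have hp : 2 ≤ p := (Fact.out : p.Prime).two_le
  have hp1 : ((p - 1 : ℕ) : K) = -1 := by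
    rw [Nat.cast_sub (by omega), CharP.cast_eq_zero, Nat.cast_one, zero_sub]
  rw [derivative_sub, derivative_mul, derivative_pow, derivative_pow, CharP.cast_eq_zero K p,
    hp1, derivative_sub, derivative_sub, derivative_X_pow, derivative_one, sub_zero, sub_zero,
    show p - 1 = p - 2 + 1 by omega, Nat.add_sub_cancel, pow_succ, C_neg, C_1, C_0]
  linear_combination ((X ^ q - 1 : K[X]) ^ (p - 2) * Φ) *
      derivative_geom_sum_mul_X_sub_one_add (R := K) q -
    ((X ^ q - 1 : K[X]) ^ (p - 2) * derivative Φ) * geom_sum_mul (X : K[X]) q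

theorem rootMultiplicity_fekete_char [IsDomain K] {q : ℕ} (hq : 2 ≤ q) (hqp : q < p) {c : K}
    (hc : ((X ^ q - 1) ^ (p - 1) * (∑ i ∈ range q, (X : K[X]) ^ i - 1) -
        (∑ i ∈ range q, (X : K[X]) ^ i - 1) ^ p).IsRoot c) :
    ((X ^ q - 1) ^ (p - 1) * (∑ i ∈ range q, (X : K[X]) ^ i - 1) -
        (∑ i ∈ range q, (X : K[X]) ^ i - 1) ^ p).rootMultiplicity c =
      ((∑ i ∈ range q, (X : K[X]) ^ i) ^ 2 - C (q : K) * X ^ (q - 1)).rootMultiplicity c + 1 :=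
    by
  have hq1 : (q : K) ≠ 1 := by
    have := natCast_ne_zero_of_pos_of_lt_char (R := K) (n := q - 1) (by omega) (by omega)
    rwa [Nat.cast_sub (by omega), Nat.cast_one, sub_ne_zero] at this
  have hcq := pow_ne_one_of_isRoot_fekete (Fact.out : p.Prime).two_le hq1 hc
  refine rootMultiplicity_eq_add_one_of_derivative_eq_mul hc
    (by rw [derivative_fekete_char, ← neg_mul]) ?_ ?_
    (rootMultiplicity_geom_sum_sq_sub_lt hq hqp c)
  · simp only [IsRoot, eval_neg, eval_pow, eval_sub, eval_X, eval_one, neg_eq_zero]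
    exact pow_ne_zero _ (sub_ne_zero.mpr hcq)
  · exact fun h => coeff_geom_sum_sq_sub_ne_zero hq hqp (by rw [h, coeff_zero])

end Fekete

theorem stmt14_general (p q : ℕ) [Fact p.Prime] (hq : q.Prime)
    (hlt : q < p)
    (Fn Fq uq : Polynomial (AlgebraicClosure (ZMod p)))
    (hFn : Fn = (Fek (p * q)).map (Int.castRingHom (AlgebraicClosure (ZMod p))))
    (hFq : Fq = (Fek q).map (Int.castRingHom (AlgebraicClosure (ZMod p))))
    (huq : uq = (((∑ i ∈ Finset.range q, X ^ i) ^ 2 - C (q : ℤ) * X ^ (q - 1)) :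
        Polynomial ℤ).map (Int.castRingHom (AlgebraicClosure (ZMod p)))) :
    Fn = (X ^ q - 1) ^ (p - 1) * Fq - Fq ^ p ∧
    derivative Fn = -((X ^ q - 1) ^ (p - 2) * uq) ∧
    ∀ x₀ : AlgebraicClosure (ZMod p), Fn.eval x₀ = 0 →
      rootMultiplicity x₀ Fn = rootMultiplicity x₀ uq + 1 := by
  have hFn' : Fn = (X ^ q - 1) ^ (p - 1) * Fq - Fq ^ p := by
    rw [hFn, hFq]
    exact map_fek_prime_mul ((Nat.coprime_primes Fact.out hq).mpr hlt.ne')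
  have hFq' : Fq = ∑ i ∈ range q, X ^ i - 1 := by
    rw [hFq, fek_of_prime hq]
    simp [Polynomial.map_sum]
  have huq' :
      uq = (∑ i ∈ range q, X ^ i) ^ 2 - C (q : AlgebraicClosure (ZMod p)) * X ^ (q - 1) := by
    rw [huq]
    simp [Polynomial.map_sum]
  subst hFn' hFq' huq'
  exact ⟨rfl, derivative_fekete_char q,
    fun c hc => rootMultiplicity_fekete_char hq.two_le hlt hc⟩

theorem stmt14 (p q : ℕ) [Fact p.Prime] (hq : q.Prime)
    (hoddp : Odd p) (hoddq : Odd q) (hlt : q < p)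
    (Fn Fq uq : Polynomial (AlgebraicClosure (ZMod p)))
    (hFn : Fn = (Fek (p * q)).map (Int.castRingHom (AlgebraicClosure (ZMod p))))
    (hFq : Fq = (Fek q).map (Int.castRingHom (AlgebraicClosure (ZMod p))))
    (huq : uq = (((∑ i ∈ Finset.range q, X ^ i) ^ 2 - C (q : ℤ) * X ^ (q - 1)) :
        Polynomial ℤ).map (Int.castRingHom (AlgebraicClosure (ZMod p)))) :
    Fn = (X ^ q - 1) ^ (p - 1) * Fq - Fq ^ p ∧
    derivative Fn = -((X ^ q - 1) ^ (p - 2) * uq) ∧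
    ∀ x₀ : AlgebraicClosure (ZMod p), Fn.eval x₀ = 0 →
      rootMultiplicity x₀ Fn = rootMultiplicity x₀ uq + 1 :=
  stmt14_general p q hq hlt Fn Fq uq hFn hFq huq
end

section
/- Let q be an odd prime, s_q(x) = x^q − 1 and t_q(x) = x + x² + ⋯ + x^{q−1}. Then: (a) Res(s_q, s_q') = q^q; (b) Res(t_q, t_q') = −(q−1)^{q−3}; (c) Res(t_q, s_q) = q − 1, where Res denotes the resultant of polynomials over ℚ. -/
/-!
Everything is reduced to Vieta's formula `∏_{f(z) = 0} (z - a) = (-1)^(deg f) f(a)` for a monic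
split `f`. For (a), `s_q'(z) = q z^(q-1)` and the roots of `s_q` have product `1` since `q` is
odd. For (b) and (c), write `t_q = X g` with `g = 1 + X + ⋯ + X^(n-1)` and `n = q - 1` even.
The roots of `g` satisfy `z^n = 1`, and differentiating `(X - 1) g = X^n - 1` gives
`(z - 1) g'(z) = n z^(n-1)` there. Hence at a root `z` of `g` we have `s_q(z) = z - 1` and
`(z - 1) t_q'(z) = n`, while `s_q(0) = -1`, `t_q'(0) = g(0) = 1` and `∏ (z - 1) = -g(1) = -n`.
-/

open Polynomial Finset

namespace Polynomial

variable {K : Type*} [Field K]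

theorem Splits.prod_roots_map_sub_eq {f : K[X]} (hf : f.Splits) (hm : f.Monic) (a : K) :
    (f.roots.map (· - a)).prod = (-1) ^ f.natDegree * f.eval a := by
  rw [hf.eval_eq_prod_roots_of_monic hm, hf.natDegree_eq_card_roots, ← Multiset.card_map (a - ·),
    ← Multiset.prod_map_neg, Multiset.map_map]
  simp

theorem natDegree_geom_sum_X {n : ℕ} (hn : n ≠ 0) :
    (∑ i ∈ range n, (X : K[X]) ^ i).natDegree = n - 1 := by
  have h := (monic_X_sub_C (1 : K)).natDegree_mul (monic_geom_sum_X hn)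
  rw [C_1, mul_geom_sum, ← C_1, natDegree_X_pow_sub_C, natDegree_X_sub_C] at h
  omega

theorem pow_eq_one_of_mem_roots_geom_sum_X {n : ℕ} {z : K}
    (hz : z ∈ (∑ i ∈ range n, (X : K[X]) ^ i).roots) : z ^ n = 1 := by
  have h := congrArg (eval z) (mul_geom_sum (X : K[X]) n)
  rw [eval_mul, (mem_roots'.mp hz).2.eq_zero, mul_zero] at h
  exact sub_eq_zero.mp (by simpa using h.symm)

theorem sub_one_mul_eval_derivative_geom_sum_X {n : ℕ} {z : K}
    (hz : z ∈ (∑ i ∈ range n, (X : K[X]) ^ i).roots) :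
    (z - 1) * (derivative (∑ i ∈ range n, (X : K[X]) ^ i)).eval z = n * z ^ (n - 1) := by
  have h := congrArg (fun p => (derivative p).eval z) (mul_geom_sum (X : K[X]) n)
  generalize ∑ i ∈ range n, (X : K[X]) ^ i = G at hz h ⊢
  simpa [derivative_mul, derivative_X_pow, (mem_roots'.mp hz).2.eq_zero] using h

theorem roots_X_mul {p : K[X]} (hp : p ≠ 0) : (X * p).roots = 0 ::ₘ p.roots := by
  rw [roots_mul (mul_ne_zero X_ne_zero hp), roots_X, Multiset.singleton_add]

theorem sum_Icc_X_pow_eq_X_mul_geom_sum (n : ℕ) :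
    ∑ a ∈ Icc 1 n, (X : K[X]) ^ a = X * ∑ i ∈ range n, X ^ i := by
  rw [mul_sum, ← Ico_add_one_right_eq_Icc, sum_Ico_eq_sum_range, Nat.add_sub_cancel]
  simp only [pow_add, pow_one]

section IsAlgClosed

variable [IsAlgClosed K]

theorem prod_roots_X_pow_sub_one_eval_derivative {n : ℕ} (hn : Odd n) :
    ((X ^ n - 1 : K[X]).roots.map fun z => (derivative (X ^ n - 1 : K[X])).eval z).prod =
      (n : K) ^ n := by
  have hn0 : n ≠ 0 := hn.pos.ne'
  have hm : (X ^ n - 1 : K[X]).Monic := by simpa using monic_X_pow_sub_C (1 : K) hn0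
  have hdeg : (X ^ n - 1 : K[X]).natDegree = n := by
    simpa using natDegree_X_pow_sub_C (n := n) (r := (1 : K))
  have hsplit := IsAlgClosed.splits (X ^ n - 1 : K[X])
  have hprod : (X ^ n - 1 : K[X]).roots.prod = 1 := by
    have h := hsplit.coeff_zero_eq_prod_roots_of_monic hm
    rw [hdeg, hn.neg_one_pow] at h
    simp [hn0.symm] at h
    exact h.symm
  simp only [derivative_sub, derivative_X_pow, derivative_one, sub_zero, eval_mul, eval_C,
    eval_pow, eval_X]
  rw [Multiset.prod_map_mul, Multiset.map_const', Multiset.prod_replicate, Multiset.prod_map_pow,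
    Multiset.map_id', hprod, one_pow, mul_one, ← hsplit.natDegree_eq_card_roots, hdeg]

theorem prod_roots_geom_sum_X_map_sub_one {n : ℕ} (hn : n ≠ 0) :
    ((∑ i ∈ range n, (X : K[X]) ^ i).roots.map (· - 1)).prod = (-1 : K) ^ (n - 1) * n := by
  rw [(IsAlgClosed.splits _).prod_roots_map_sub_eq (monic_geom_sum_X hn), natDegree_geom_sum_X hn,
    eval_geom_sum, one_geom_sum]

theorem prod_roots_X_mul_geom_sum_X_eval_X_pow_succ_sub_one {n : ℕ} (hn : Even n)
    (hn0 : n ≠ 0) :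
    ((X * ∑ i ∈ range n, (X : K[X]) ^ i).roots.map
      fun z => (X ^ (n + 1) - 1 : K[X]).eval z).prod = (n : K) := by
  have hroot : ∀ z ∈ (∑ i ∈ range n, (X : K[X]) ^ i).roots,
      (X ^ (n + 1) - 1 : K[X]).eval z = z - 1 := by
    intro z hz
    simp [pow_succ, pow_eq_one_of_mem_roots_geom_sum_X hz]
  rw [roots_X_mul (monic_geom_sum_X hn0).ne_zero, Multiset.map_cons, Multiset.prod_cons,
    Multiset.map_congr rfl hroot, prod_roots_geom_sum_X_map_sub_one hn0,
    (Nat.Even.sub_odd (by omega) hn odd_one).neg_one_pow]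
  simp

theorem prod_roots_X_mul_geom_sum_X_eval_derivative [CharZero K] {n : ℕ} (hn : Even n)
    (hn0 : n ≠ 0) :
    ((X * ∑ i ∈ range n, (X : K[X]) ^ i).roots.map
      fun z => (derivative (X * ∑ i ∈ range n, (X : K[X]) ^ i)).eval z).prod =
      -(n : K) ^ (n - 2) := by
  have hn2 : 2 ≤ n := by
    obtain ⟨k, rfl⟩ := hn
    omega
  set G := ∑ i ∈ range n, (X : K[X]) ^ i with hG
  have hG0 : G.eval 0 = 1 := by simp [hG, eval_geom_sum, hn0]
  have hcard : Multiset.card G.roots = n - 1 := by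
    rw [← (IsAlgClosed.splits G).natDegree_eq_card_roots, natDegree_geom_sum_X hn0]
  have hroot : ∀ z ∈ G.roots, (derivative (X * G)).eval z = z * (derivative G).eval z := by
    intro z hz
    simp [derivative_mul, (mem_roots'.mp hz).2.eq_zero]
  have hkey : ∀ z ∈ G.roots, (z - 1) * (z * (derivative G).eval z) = n := by
    intro z hz
    rw [mul_left_comm, sub_one_mul_eval_derivative_geom_sum_X hz, mul_left_comm, ← pow_succ',
      Nat.sub_add_cancel (by omega), pow_eq_one_of_mem_roots_geom_sum_X hz, mul_one]
  have hprod : (G.roots.map (· - 1)).prod *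
      (G.roots.map fun z => z * (derivative G).eval z).prod = (n : K) ^ (n - 1) := by
    rw [← Multiset.prod_map_mul, Multiset.map_congr rfl hkey, Multiset.map_const',
      Multiset.prod_replicate, hcard]
  rw [prod_roots_geom_sum_X_map_sub_one hn0, (Nat.Even.sub_odd (by omega) hn odd_one).neg_one_pow,
    show n - 1 = n - 2 + 1 by omega, pow_succ] at hprod
  rw [roots_X_mul (monic_geom_sum_X hn0).ne_zero, Multiset.map_cons, Multiset.prod_cons,
    Multiset.map_congr rfl hroot, derivative_mul]
  simp only [derivative_X, one_mul, eval_add, eval_mul, eval_X, zero_mul, add_zero, hG0]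
  apply mul_left_cancel₀ (neg_ne_zero.mpr (Nat.cast_ne_zero.mpr hn0) : -(n : K) ≠ 0)
  linear_combination hprod

end IsAlgClosed

end Polynomial

theorem stmt15 (q : ℕ) (hq : q.Prime) (hodd : Odd q)
    (sq tq : Polynomial ℂ)
    (hsq : sq = X ^ q - 1)
    (htq : tq = ∑ a ∈ Finset.Icc 1 (q - 1), X ^ a) :
    (sq.roots.map (fun z => (derivative sq).eval z)).prod = (q : ℂ) ^ q ∧
    (tq.roots.map (fun z => (derivative tq).eval z)).prod = -((q : ℂ) - 1) ^ (q - 3) ∧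
    (tq.roots.map (fun z => sq.eval z)).prod = (q : ℂ) - 1 := by
  obtain ⟨k, rfl⟩ := hodd
  have hk : 2 * k ≠ 0 := by
    rintro h
    simp [h, Nat.not_prime_one] at hq
  rw [Nat.add_sub_cancel, sum_Icc_X_pow_eq_X_mul_geom_sum] at htq
  subst hsq htq
  refine ⟨by exact_mod_cast prod_roots_X_pow_sub_one_eval_derivative (odd_two_mul_add_one k),
    ?_, ?_⟩
  · rw [prod_roots_X_mul_geom_sum_X_eval_derivative (even_two_mul k) hk,
      show 2 * k + 1 - 3 = 2 * k - 2 by omega]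
    push_cast
    ring
  · rw [prod_roots_X_mul_geom_sum_X_eval_X_pow_succ_sub_one (even_two_mul k) hk]
    push_cast
    ring
end

section
/- Let p > 3 be a prime and let x₀ ∈ 𝔽̄_p be a root of F_{3p} (reduced mod p). Then the multiplicity of x₀ as a root of F_{3p} over 𝔽̄_p is at most 2; and its multiplicity is exactly 2 if and only if x₀ ∈ 𝔽_p and x₀ is a root of u₃(x) = x⁴ + 2x³ + 2x + 1. -/
open Polynomial

namespace Stmt18Aux

abbrev Kk (p : ℕ) [Fact p.Prime] : Type := AlgebraicClosure (ZMod p)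

variable (p : ℕ) [Fact p.Prime]

lemma frobFixed {r : Kk p} (h : r ^ p = r) :
    ∃ y : ZMod p, algebraMap (ZMod p) (Kk p) y = r := by
  classical
  have hp1 : 1 < p := (Fact.out : p.Prime).one_lt
  set f : (Kk p)[X] := X ^ p - X with hf
  have hf0 : f ≠ 0 := FiniteField.X_pow_card_sub_X_ne_zero _ hp1
  have hdeg : f.natDegree = p := FiniteField.X_pow_card_sub_X_natDegree_eq _ hp1
  set S : Finset (Kk p) :=
    Finset.univ.image (fun y : ZMod p => algebraMap (ZMod p) (Kk p) y) with hS
  have hcard : S.card = p := by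
    rw [hS, Finset.card_image_of_injective _ (algebraMap (ZMod p) (Kk p)).injective,
      Finset.card_univ, ZMod.card]
  have hsub : S ⊆ f.roots.toFinset := by
    intro z hz
    simp only [hS, Finset.mem_image] at hz
    obtain ⟨y, _, rfl⟩ := hz
    rw [Multiset.mem_toFinset, mem_roots hf0]
    have hy : (algebraMap (ZMod p) (Kk p) y) ^ p = algebraMap (ZMod p) (Kk p) y := by
      rw [← map_pow, ZMod.pow_card]
    simp [Polynomial.IsRoot, hf, hy]
  have hcard2 : f.roots.toFinset.card ≤ p :=
    le_trans (Multiset.toFinset_card_le _) (le_trans (Polynomial.card_roots' f) hdeg.le)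
  have hEq : S = f.roots.toFinset := Finset.eq_of_subset_of_card_le hsub (by omega)
  have hr : r ∈ f.roots.toFinset := by
    rw [Multiset.mem_toFinset, mem_roots hf0]
    simp [Polynomial.IsRoot, hf, sub_eq_zero, h]
  rw [← hEq] at hr
  simp only [hS, Finset.mem_image] at hr
  obtain ⟨y, _, hy⟩ := hr
  exact ⟨y, hy⟩

lemma algPart {K : Type*} [Field K] (q : ℕ) [Fact q.Prime] [CharP K q] (hgt : 3 < q)
    (Sa S3 : K[X])
    (h1 : Sa * (X - 1) = X^(3*q) - 1)
    (h2 : S3 * (X^3 - 1) = X^(3*q) - 1) :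
    Sa - S3 - (1 + X^q + X^(2*q)) + 1 =
      X * (X+1) * (((X : K[X])^3-1)^(q-1) - (X^2+X)^(q-1)) := by
  haveI : CharP (K[X]) q := inferInstance
  obtain ⟨n, rfl⟩ : ∃ n, q = n + 1 := ⟨q - 1, by omega⟩
  have hn : n + 1 - 1 = n := rfl
  rw [hn]
  have e1 : (X : K[X])^(3*(n+1)) - 1 = (X^3-1)^n * (X^3-1) := by
    rw [← pow_succ, sub_pow_char (X^3 : K[X]) 1, one_pow, ← pow_mul]
  have e2 : (X : K[X])^(2*(n+1)) + X^(n+1) = (X^2+X)^n * (X^2+X) := by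
    rw [← pow_succ, add_pow_char ((X^2 : K[X])) X, ← pow_mul]
  have hD : ((X : K[X]) - 1) * (X^3 - 1) ≠ 0 := by
    apply mul_ne_zero
    · intro h
      have := congrArg (eval 0) h
      simp at this
    · intro h
      have := congrArg (eval 0) h
      simp at this
  apply mul_right_cancel₀ hD
  linear_combination ((X : K[X])^3 - 1) * h1 - ((X : K[X]) - 1) * h2
    + ((X : K[X])^3 - X) * e1 - (((X : K[X]) - 1) * (X^3 - 1)) * e2

lemma fekFactor (hgt : 3 < p) :
    (Fek (3*p)).map (Int.castRingHom (Kk p)) =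
      X * (X+1) * (((X : (Kk p)[X])^3-1)^(p-1) - (X^2+X)^(p-1)) := by
  classical
  have hp : p.Prime := Fact.out
  have hmap : (Fek (3*p)).map (Int.castRingHom (Kk p)) =
      ∑ a ∈ Finset.range (3*p), if Nat.gcd a (3*p) = 1 then (X : (Kk p)[X])^a else 0 := by
    unfold Fek
    rw [Polynomial.map_sum]
    refine Finset.sum_congr rfl fun a _ => ?_
    split <;> simp
  have hterm : ∀ a ∈ Finset.range (3*p),
      (if Nat.gcd a (3*p) = 1 then (X : (Kk p)[X])^a else 0) =
      X^a - (if 3 ∣ a then X^a else 0) - (if p ∣ a then X^a else 0)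
        + (if a = 0 then X^a else 0) := by
    intro a ha
    rw [Finset.mem_range] at ha
    have hco : Nat.gcd a (3*p) = 1 ↔ ¬(3 ∣ a) ∧ ¬(p ∣ a) := by
      rw [show (Nat.gcd a (3*p) = 1) = (Nat.Coprime a (3*p)) from rfl,
        Nat.coprime_mul_iff_right, @Nat.coprime_comm a 3, @Nat.coprime_comm a p,
        Nat.Prime.coprime_iff_not_dvd (by norm_num), Nat.Prime.coprime_iff_not_dvd hp]
    by_cases h3 : 3 ∣ a <;> by_cases hpa : p ∣ a
    · have ha0 : a = 0 := by
        have h3p : (3*p) ∣ a := (Nat.Coprime.mul_dvd_of_dvd_of_dvd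
          ((Nat.coprime_primes (by norm_num) hp).mpr (by omega)) h3 hpa)
        rcases h3p with ⟨c, rfl⟩
        rcases Nat.eq_zero_or_pos c with rfl | hc
        · simp
        · nlinarith
      simp [hco, ha0]
    · have ha0 : a ≠ 0 := by rintro rfl; exact hpa ⟨0, rfl⟩
      simp [hco, h3, hpa, ha0]
    · have ha0 : a ≠ 0 := by rintro rfl; exact h3 ⟨0, rfl⟩
      simp [hco, h3, hpa, ha0]
    · have ha0 : a ≠ 0 := by rintro rfl; exact h3 ⟨0, rfl⟩
      simp [hco, h3, hpa, ha0]
  have hS3 : (∑ a ∈ Finset.range (3*p), (if 3 ∣ a then (X : (Kk p)[X])^a else 0)) =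
      ∑ b ∈ Finset.range p, ((X : (Kk p)[X])^3)^b := by
    rw [Finset.sum_ite, Finset.sum_const_zero, add_zero]
    refine Finset.sum_nbij' (fun a => a/3) (fun b => 3*b) ?_ ?_ ?_ ?_ ?_
    · intro a ha
      simp only [Finset.mem_filter, Finset.mem_range] at ha ⊢
      omega
    · intro b hb
      simp only [Finset.mem_filter, Finset.mem_range] at hb ⊢
      omega
    · intro a ha
      simp only [Finset.mem_filter, Finset.mem_range] at ha
      show 3 * (a / 3) = a
      omega
    · intro b _
      show (3 * b) / 3 = b
      omega
    · intro a ha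
      simp only [Finset.mem_filter, Finset.mem_range] at ha
      show (X : (Kk p)[X])^a = (X^3)^(a/3)
      rw [← pow_mul]
      congr 1
      omega
  have hSp : (∑ a ∈ Finset.range (3*p), (if p ∣ a then (X : (Kk p)[X])^a else 0)) =
      1 + X^p + X^(2*p) := by
    have key : (∑ a ∈ Finset.range (3*p), (if p ∣ a then (X : (Kk p)[X])^a else 0)) =
        ∑ b ∈ Finset.range 3, ((X : (Kk p)[X])^p)^b := by
      rw [Finset.sum_ite, Finset.sum_const_zero, add_zero]
      refine Finset.sum_nbij' (fun a => a/p) (fun b => p*b) ?_ ?_ ?_ ?_ ?_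
      · intro a ha
        simp only [Finset.mem_filter, Finset.mem_range] at ha ⊢
        rcases ha.2 with ⟨c, rfl⟩
        have h1 := ha.1
        rw [Nat.mul_div_cancel_left _ (by omega : 0 < p)]
        by_contra h
        push_neg at h
        nlinarith
      · intro b hb
        simp only [Finset.mem_filter, Finset.mem_range] at hb ⊢
        refine ⟨by nlinarith, ⟨b, rfl⟩⟩
      · intro a ha
        simp only [Finset.mem_filter, Finset.mem_range] at ha
        show p * (a / p) = a
        exact Nat.mul_div_cancel' ha.2
      · intro b _
        show (p * b) / p = b
        exact Nat.mul_div_cancel_left _ (by omega : 0 < p)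
      · intro a ha
        simp only [Finset.mem_filter, Finset.mem_range] at ha
        show (X : (Kk p)[X])^a = (X^p)^(a/p)
        rw [← pow_mul]
        congr 1
        exact (Nat.mul_div_cancel' ha.2).symm
    rw [key, Finset.sum_range_succ, Finset.sum_range_succ, Finset.sum_range_one,
      ← pow_mul, ← pow_mul]
    ring_nf
  have h0 : (∑ a ∈ Finset.range (3*p), (if a = 0 then (X : (Kk p)[X])^a else 0)) = 1 := by
    rw [Finset.sum_ite_eq' (Finset.range (3*p)) 0]
    have hps : 0 < 3*p := by have := hp.one_lt; omega
    simp [Finset.mem_range, hps]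
  rw [hmap, Finset.sum_congr rfl hterm]
  rw [Finset.sum_add_distrib, Finset.sum_sub_distrib, Finset.sum_sub_distrib,
    hS3, hSp, h0]
  haveI : CharP (Kk p) p := inferInstance
  exact algPart p hgt _ _ (geom_sum_mul X (3*p))
    (by rw [geom_sum_mul, ← pow_mul])

end Stmt18Aux

set_option maxHeartbeats 1000000 in
theorem stmt18 (p : ℕ) [Fact p.Prime] (hgt : 3 < p)
    (Fn u3 : Polynomial (AlgebraicClosure (ZMod p)))
    (hFn : Fn = (Fek (3 * p)).map (Int.castRingHom (AlgebraicClosure (ZMod p))))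
    (hu3 : u3 = X ^ 4 + 2 * X ^ 3 + 2 * X + 1) :
    ∀ x₀ : AlgebraicClosure (ZMod p), Fn.eval x₀ = 0 →
      rootMultiplicity x₀ Fn ≤ 2 ∧
      (rootMultiplicity x₀ Fn = 2 ↔
        (∃ y : ZMod p, algebraMap (ZMod p) (AlgebraicClosure (ZMod p)) y = x₀) ∧
          u3.eval x₀ = 0) := by
  intro x₀ hx0ev
  classical
  subst hFn hu3
  have hp : p.Prime := Fact.out
  have hp4 : p ≠ 4 := by rintro rfl; norm_num at hp
  obtain ⟨m, rfl⟩ : ∃ m, p = m + 5 := ⟨p - 5, by omega⟩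
  haveI : CharP (Stmt18Aux.Kk (m+5)) (m+5) := inferInstance
  have h2ne : (2 : Stmt18Aux.Kk (m+5)) ≠ 0 := by
    intro h
    have h2 : ((2:ℕ) : Stmt18Aux.Kk (m+5)) = 0 := by push_cast; exact h
    have hd := (CharP.cast_eq_zero_iff (Stmt18Aux.Kk (m+5)) (m+5) 2).mp h2
    have := Nat.le_of_dvd (by norm_num) hd
    omega
  have h3ne : (3 : Stmt18Aux.Kk (m+5)) ≠ 0 := by
    intro h
    have h2 : ((3:ℕ) : Stmt18Aux.Kk (m+5)) = 0 := by push_cast; exact h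
    have hd := (CharP.cast_eq_zero_iff (Stmt18Aux.Kk (m+5)) (m+5) 3).mp h2
    have := Nat.le_of_dvd (by norm_num) hd
    omega
  have hfac := Stmt18Aux.fekFactor (m+5) hgt
  rw [show m+5-1 = m+4 by omega] at hfac
  rw [hfac] at hx0ev ⊢
  set G : (Stmt18Aux.Kk (m+5))[X] :=
    ((X : (Stmt18Aux.Kk (m+5))[X])^3-1)^(m+4) - (X^2+X)^(m+4) with hGdef
  have hG0 : eval 0 G ≠ 0 := by
    have h : eval 0 G = (-1 : Stmt18Aux.Kk (m+5))^(m+4) := by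
      simp [hGdef, zero_pow (show m+4 ≠ 0 by omega)]
    rw [h]
    exact pow_ne_zero _ (neg_ne_zero.mpr one_ne_zero)
  have hGm1 : eval (-1) G ≠ 0 := by
    have h : eval (-1) G = (-2 : Stmt18Aux.Kk (m+5))^(m+4) := by
      norm_num [hGdef, zero_pow (show m+4 ≠ 0 by omega)]
    rw [h]
    exact pow_ne_zero _ (neg_ne_zero.mpr h2ne)
  have hGne : G ≠ 0 := fun h => hG0 (by rw [h]; simp)
  have hX1ne : ((X : (Stmt18Aux.Kk (m+5))[X]) + 1) ≠ 0 := by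
    intro h
    have := congrArg (eval 0) h
    simp at this
  have hFnne : (X : (Stmt18Aux.Kk (m+5))[X]) * (X+1) * G ≠ 0 :=
    mul_ne_zero (mul_ne_zero X_ne_zero hX1ne) hGne
  have hrm : ∀ z : Stmt18Aux.Kk (m+5),
      rootMultiplicity z ((X : (Stmt18Aux.Kk (m+5))[X]) * (X+1) * G) =
      rootMultiplicity z X + rootMultiplicity z (X+1) + rootMultiplicity z G := by
    intro z
    rw [rootMultiplicity_mul hFnne, rootMultiplicity_mul (mul_ne_zero X_ne_zero hX1ne)]
  have hu3E : ∀ z : Stmt18Aux.Kk (m+5),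
      eval z ((X : (Stmt18Aux.Kk (m+5))[X])^4 + 2*X^3 + 2*X + 1)
        = z^4 + 2*z^3 + 2*z + 1 := by
    intro z; simp
  have hXrw : (X : (Stmt18Aux.Kk (m+5))[X]) = X - C 0 := by simp
  have hX1rw : ((X : (Stmt18Aux.Kk (m+5))[X]) + 1) = X - C (-1) := by
    simp [map_neg, sub_neg_eq_add]
  by_cases hz0 : x₀ = 0
  · subst hz0
    have h1 : rootMultiplicity (0 : Stmt18Aux.Kk (m+5)) X = 1 := by
      rw [hXrw]; exact rootMultiplicity_X_sub_C_self
    have h2 : rootMultiplicity (0 : Stmt18Aux.Kk (m+5)) (X+1) = 0 :=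
      rootMultiplicity_eq_zero (by simp [IsRoot])
    have h3 : rootMultiplicity (0 : Stmt18Aux.Kk (m+5)) G = 0 :=
      rootMultiplicity_eq_zero (fun h => hG0 h)
    rw [hrm 0, h1, h2, h3]
    refine ⟨by norm_num, ?_⟩
    constructor
    · intro h; norm_num at h
    · rintro ⟨-, hu⟩
      rw [hu3E 0] at hu
      norm_num at hu
  · by_cases hz1 : x₀ = -1
    · subst hz1
      have h1 : rootMultiplicity (-1 : Stmt18Aux.Kk (m+5)) X = 0 :=
        rootMultiplicity_eq_zero (by simp [IsRoot])
      have h2 : rootMultiplicity (-1 : Stmt18Aux.Kk (m+5)) (X+1) = 1 := by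
        rw [hX1rw]; exact rootMultiplicity_X_sub_C_self
      have h3 : rootMultiplicity (-1 : Stmt18Aux.Kk (m+5)) G = 0 :=
        rootMultiplicity_eq_zero (fun h => hGm1 h)
      rw [hrm (-1), h1, h2, h3]
      refine ⟨by norm_num, ?_⟩
      constructor
      · intro h; norm_num at h
      · rintro ⟨-, hu⟩
        rw [hu3E (-1)] at hu
        have h2z : (2 : Stmt18Aux.Kk (m+5)) = 0 := by linear_combination -hu
        exact absurd h2z h2ne
    · -- main case
      have hXrm : rootMultiplicity x₀ (X : (Stmt18Aux.Kk (m+5))[X]) = 0 :=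
        rootMultiplicity_eq_zero (by simpa [IsRoot] using hz0)
      have hX1rm : rootMultiplicity x₀ ((X : (Stmt18Aux.Kk (m+5))[X]) + 1) = 0 := by
        refine rootMultiplicity_eq_zero ?_
        simp only [IsRoot, eval_add, eval_X, eval_one]
        intro h
        exact hz1 (by linear_combination h)
      have hGx : eval x₀ G = 0 := by
        simp only [eval_mul, eval_add, eval_X, eval_one] at hx0ev
        rcases mul_eq_zero.mp hx0ev with h | h
        · rcases mul_eq_zero.mp h with h' | h'
          · exact absurd h' hz0
          · exact absurd (by linear_combination h') hz1
        · exact h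
      have hbne : x₀^2 + x₀ ≠ 0 := by
        intro h
        rcases mul_eq_zero.mp (show x₀*(x₀+1) = 0 by linear_combination h) with h' | h'
        · exact hz0 h'
        · exact hz1 (by linear_combination h')
      have hab : (x₀^3-1)^(m+4) = (x₀^2+x₀)^(m+4) := by
        have h : eval x₀ G = (x₀^3-1)^(m+4) - (x₀^2+x₀)^(m+4) := by
          rw [hGdef]
          simp only [eval_sub, eval_pow, eval_add, eval_one, eval_X]
        rw [h] at hGx
        linear_combination hGx
      have hane : x₀^3 - 1 ≠ 0 := by
        intro h
        have hb0 : (x₀^2+x₀)^(m+4) = 0 := by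
          rw [← hab, h, zero_pow (show m+4 ≠ 0 by omega)]
        exact hbne (pow_eq_zero_iff (show m+4 ≠ 0 by omega) |>.mp hb0)
      have hapowne : (x₀^3-1)^(m+4) ≠ 0 := pow_ne_zero _ hane
      have habne : (x₀^3-1)*(x₀^2+x₀) ≠ 0 := mul_ne_zero hane hbne
      have h5cast : ((m:Stmt18Aux.Kk (m+5)) + 5) = 0 := by
        have := CharP.cast_eq_zero (Stmt18Aux.Kk (m+5)) (m+5)
        push_cast at this
        exact this
      have hc4 : ((m:Stmt18Aux.Kk (m+5)) + 4) = -1 := by linear_combination h5cast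
      have hc3 : ((m:Stmt18Aux.Kk (m+5)) + 3) = -2 := by linear_combination h5cast
      have hdval : eval x₀ (derivative G) =
          (-1 : Stmt18Aux.Kk (m+5)) * ((x₀^3-1)^(m+3) * (3*x₀^2) - (x₀^2+x₀)^(m+3) * (2*x₀+1)) := by
        have h : eval x₀ (derivative G) =
            ((m:Stmt18Aux.Kk (m+5))+4) * ((x₀^3-1)^(m+3) * (3*x₀^2) - (x₀^2+x₀)^(m+3) * (2*x₀+1)) := by
          simp only [hGdef, derivative_sub, derivative_pow, show m+4-1 = m+3 by omega,
            derivative_add, derivative_one, derivative_X_pow, derivative_X,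
            eval_sub, eval_mul, eval_pow, eval_add, eval_one, eval_X, eval_C,
            eval_natCast, eval_zero]
          push_cast
          ring
        rw [h, hc4]
      have key1 : eval x₀ (derivative G) * ((x₀^3-1)*(x₀^2+x₀)) =
          -((x₀^3-1)^(m+4)) * (x₀^4+2*x₀^3+2*x₀+1) := by
        rw [hdval]
        linear_combination (-(2*x₀+1)*(x₀^3-1)) * hab
      have hiff1 : eval x₀ (derivative G) = 0 ↔ x₀^4+2*x₀^3+2*x₀+1 = 0 := by
        constructor
        · intro h
          rw [h, zero_mul] at key1
          rcases mul_eq_zero.mp key1.symm with h' | h'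
          · exact absurd (neg_eq_zero.mp h') hapowne
          · exact h'
        · intro h
          rw [h, mul_zero] at key1
          rcases mul_eq_zero.mp key1 with h' | h'
          · exact h'
          · exact absurd h' habne
      have key2 : x₀^4+2*x₀^3+2*x₀+1 = 0 → eval x₀ (derivative (derivative G)) ≠ 0 := by
        intro hu h0
        have hddval : eval x₀ (derivative (derivative G)) =
            (-1 : Stmt18Aux.Kk (m+5)) * ( (-2 : Stmt18Aux.Kk (m+5)) * (x₀^3-1)^(m+2) * (3*x₀^2) * (3*x₀^2)
              + (x₀^3-1)^(m+3) * (6*x₀)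
              - ((-2 : Stmt18Aux.Kk (m+5)) * (x₀^2+x₀)^(m+2) * (2*x₀+1) * (2*x₀+1)
                + (x₀^2+x₀)^(m+3) * 2) ) := by
          have h : eval x₀ (derivative (derivative G)) =
              ((m:Stmt18Aux.Kk (m+5))+4) * ( ((m:Stmt18Aux.Kk (m+5))+3) * (x₀^3-1)^(m+2) * (3*x₀^2) * (3*x₀^2)
                + (x₀^3-1)^(m+3) * (6*x₀)
                - (((m:Stmt18Aux.Kk (m+5))+3) * (x₀^2+x₀)^(m+2) * (2*x₀+1) * (2*x₀+1)
                  + (x₀^2+x₀)^(m+3) * 2) ) := by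
            simp only [hGdef, derivative_sub, derivative_pow, show m+4-1 = m+3 by omega,
              show m+3-1 = m+2 by omega, derivative_add, derivative_one,
              derivative_X_pow, derivative_X, derivative_mul, derivative_C, derivative_zero,
              eval_sub, eval_mul, eval_pow, eval_add, eval_one, eval_X, eval_C,
              eval_natCast, eval_zero]
            push_cast
            ring
          rw [h, hc4, hc3]
        have k2 : eval x₀ (derivative (derivative G)) * ((x₀^3-1)^2*(x₀^2+x₀)^2) =
            -2*(x₀^3-1)^(m+4)*((x₀^3-1)*(x₀^2+x₀))*(2*x₀^3+3*x₀^2+1) := by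
          rw [hddval]
          linear_combination ((2*(x₀^4+2*x₀^3+2*x₀+1) + 4*(2*x₀+1)*(x₀^3-1)) * (x₀^3-1)^(m+4)) * hu
            + (2*(2*x₀+1)^2*(x₀^3-1)^2 - 2*(x₀^3-1)^2*(x₀^2+x₀)) * hab
        rw [h0, zero_mul] at k2
        have hw : 2*x₀^3+3*x₀^2+1 = 0 := by
          by_contra hww
          exact (mul_ne_zero (mul_ne_zero (mul_ne_zero
            (neg_ne_zero.mpr h2ne) hapowne) habne) hww) k2.symm
        have h6 : (6 : Stmt18Aux.Kk (m+5)) = 0 := by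
          linear_combination (-4*x₀^2-4*x₀+3) * hu + (2*x₀^3+3*x₀^2-2*x₀+3) * hw
        exact (mul_ne_zero h2ne h3ne) (by linear_combination h6)
      have hle2 : rootMultiplicity x₀ G ≤ 2 := by
        by_contra hgt2
        push_neg at hgt2
        have hd1 : IsRoot (derivative G) x₀ := by
          have := Polynomial.isRoot_iterate_derivative_of_lt_rootMultiplicity
            (show 1 < rootMultiplicity x₀ G by omega)
          simpa using this
        have hd2 : IsRoot (derivative (derivative G)) x₀ := by
          have := Polynomial.isRoot_iterate_derivative_of_lt_rootMultiplicity
            (show 2 < rootMultiplicity x₀ G by omega)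
          simpa [Function.iterate_succ_apply'] using this
        exact key2 (hiff1.mp hd1) hd2
      have h2iff : rootMultiplicity x₀ G = 2 ↔ x₀^4+2*x₀^3+2*x₀+1 = 0 := by
        constructor
        · intro h
          exact hiff1.mp ((one_lt_rootMultiplicity_iff_isRoot hGne).mp (by omega)).2
        · intro hu
          have h1 := (one_lt_rootMultiplicity_iff_isRoot hGne).mpr ⟨hGx, hiff1.mpr hu⟩
          omega
      have hmem : x₀^4+2*x₀^3+2*x₀+1 = 0 →
          ∃ y : ZMod (m+5), algebraMap (ZMod (m+5)) (Stmt18Aux.Kk (m+5)) y = x₀ := by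
        intro hu
        obtain ⟨r, hrdef⟩ : ∃ r : Stmt18Aux.Kk (m+5), r = (x₀^3-1) * (x₀^2+x₀)⁻¹ :=
          ⟨_, rfl⟩
        have hrb : r * (x₀^2+x₀) = x₀^3-1 := by
          rw [hrdef, mul_assoc, inv_mul_cancel₀ hbne, mul_one]
        have hrp : r ^ (m+5) = r := by
          have hcalc : r^(m+5) * (x₀^2+x₀)^(m+5) = r * (x₀^2+x₀)^(m+5) := by
            calc r^(m+5) * (x₀^2+x₀)^(m+5) = (r*(x₀^2+x₀))^(m+5) := by rw [mul_pow]
              _ = (x₀^3-1)^(m+5) := by rw [hrb]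
              _ = (x₀^3-1)^(m+4) * (x₀^3-1) := by ring
              _ = (x₀^3-1)^(m+4) * (r * (x₀^2+x₀)) := by rw [hrb]
              _ = r * ((x₀^3-1)^(m+4) * (x₀^2+x₀)) := by ring
              _ = r * ((x₀^2+x₀)^(m+4) * (x₀^2+x₀)) := by rw [hab]
              _ = r * (x₀^2+x₀)^(m+5) := by ring
          exact mul_right_cancel₀ (pow_ne_zero _ hbne) hcalc
        have hq1 : 3*x₀^2 = r*(2*x₀+1) := by
          have h1 : (3*x₀^2)*(x₀^2+x₀) = (r*(2*x₀+1))*(x₀^2+x₀) := by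
            calc (3*x₀^2)*(x₀^2+x₀) = (2*x₀+1)*(x₀^3-1) := by linear_combination hu
              _ = (2*x₀+1)*(r*(x₀^2+x₀)) := by rw [hrb]
              _ = (r*(2*x₀+1))*(x₀^2+x₀) := by ring
          exact mul_right_cancel₀ hbne h1
        by_cases hfix : x₀^(m+5) = x₀
        · exact Stmt18Aux.frobFixed (m+5) hfix
        · exfalso
          have hp0 : m+5 ≠ 0 := by omega
          have h2p : (2 : Stmt18Aux.Kk (m+5))^(m+5) = 2 := by
            have h := congrArg (algebraMap (ZMod (m+5)) (Stmt18Aux.Kk (m+5)))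
              (ZMod.pow_card (2 : ZMod (m+5)))
            rw [map_pow, map_ofNat] at h
            exact h
          have h3p : (3 : Stmt18Aux.Kk (m+5))^(m+5) = 3 := by
            have h := congrArg (algebraMap (ZMod (m+5)) (Stmt18Aux.Kk (m+5)))
              (ZMod.pow_card (3 : ZMod (m+5)))
            rw [map_pow, map_ofNat] at h
            exact h
          have hq2 : 3*(x₀^(m+5))^2 = r*(2*(x₀^(m+5))+1) := by
            have h := congrArg (· ^ (m+5)) hq1
            rw [mul_pow, mul_pow, add_pow_char, mul_pow, one_pow, h2p, h3p, hrp,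
              pow_right_comm] at h
            exact h
          have huy : (x₀^(m+5))^4 + 2*(x₀^(m+5))^3 + 2*(x₀^(m+5)) + 1 = 0 := by
            have h := congrArg (· ^ (m+5)) hu
            rw [add_pow_char, add_pow_char, add_pow_char, mul_pow, mul_pow, one_pow, h2p,
              pow_right_comm x₀ 4 (m+5), pow_right_comm x₀ 3 (m+5), zero_pow hp0] at h
            exact h
          have hfactor : (x₀ - x₀^(m+5)) * (3*(x₀+x₀^(m+5)) - 2*r) = 0 := by
            linear_combination hq1 - hq2
          have h3s : 3*(x₀+x₀^(m+5)) = 2*r := by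
            rcases mul_eq_zero.mp hfactor with h | h
            · exact absurd (sub_eq_zero.mp h).symm hfix
            · linear_combination h
          have h9 : (3 : Stmt18Aux.Kk (m+5))*((x₀+x₀^(m+5))*(2*x₀+1) - 2*x₀^2) = 0 := by
            linear_combination (2*x₀+1)*h3s - 2*hq1
          have h10 : (x₀+x₀^(m+5))*(2*x₀+1) = 2*x₀^2 := by
            rcases mul_eq_zero.mp h9 with h | h
            · exact absurd h h3ne
            · linear_combination h
          have hx'e : x₀^(m+5)*(2*x₀+1) = -x₀ := by linear_combination h10
          have hv : -3*x₀^4+6*x₀^3+12*x₀^2+6*x₀+1 = 0 := by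
            linear_combination (2*x₀+1)^4 * huy +
              ( (x₀^(m+5))^3*(-1-6*x₀-12*x₀^2-8*x₀^3)
                + (x₀^(m+5))^2*(-2-11*x₀-20*x₀^2-12*x₀^3)
                + (x₀^(m+5))*(2*x₀+7*x₀^2+6*x₀^3) + (-2-12*x₀-26*x₀^2-19*x₀^3) ) * hx'e
          have h8 : (8 : Stmt18Aux.Kk (m+5)) = 0 := by
            linear_combination (144*x₀^3 - 351*x₀^2 - 423*x₀ - 102) * hu
              + (48*x₀^3 + 75*x₀^2 - 33*x₀ + 110) * hv
          exact (mul_ne_zero h2ne (mul_ne_zero h2ne h2ne)) (by linear_combination h8)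
      rw [hrm x₀, hXrm, hX1rm]
      simp only [zero_add]
      refine ⟨hle2, ?_⟩
      constructor
      · intro h
        have hu := h2iff.mp h
        exact ⟨hmem hu, by rw [hu3E x₀]; exact hu⟩
      · rintro ⟨-, hu⟩
        rw [hu3E x₀] at hu
        exact h2iff.mpr hu
end
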